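/- arXiv:math/0609446 — 9 statements merged into one kernel-verified Lean document; each statement's English description precedes it below -/
import Mathlib

section
/- For every invertible real r×r matrix T there exists a unique real symmetric positive definite r×r matrix A such that Tᵀ · A · T = A · A (i.e. TᵀAT = A²). -/
open Matrix Filter Topology

section SqrtPort

open scoped MatrixOrder

variable {n : Type*} [Fintype n] [DecidableEq n]

/-- square root of a positive semidefinite matrix (via the CFC) -/
noncomputable def Matrix.PosSemidef.sqrt {A : Matrix n n ℝ} (_ : A.PosSemidef) :
    Matrix n n ℝ :=
  CFC.sqrt A

lemma Matrix.PosSemidef.posSemidef_sqrt {A : Matrix n n ℝ} (hA : A.PosSemidef) :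
    hA.sqrt.PosSemidef :=
  (CFC.sqrt_nonneg A).posSemidef

lemma Matrix.PosSemidef.sqrt_mul_self {A : Matrix n n ℝ} (hA : A.PosSemidef) :
    hA.sqrt * hA.sqrt = A :=
  CFC.sqrt_mul_sqrt_self A hA.nonneg

lemma Matrix.PosSemidef.eq_sqrt_of_sq_eq {A B : Matrix n n ℝ} (hA : A.PosSemidef)
    (hB : B.PosSemidef) (hAB : A ^ 2 = B) : A = hB.sqrt :=
  (CFC.sqrt_unique (by rw [← pow_two, hAB]) hA.nonneg).symm

end SqrtPort

namespace Bushell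

set_option linter.unusedSectionVars false

variable {n : Type*} [Fintype n] [DecidableEq n]

/-- quadratic form -/
noncomputable abbrev q (M : Matrix n n ℝ) (v : n → ℝ) : ℝ := v ⬝ᵥ (M *ᵥ v)

lemma psd_iff {M : Matrix n n ℝ} :
    M.PosSemidef ↔ M.IsHermitian ∧ ∀ v : n → ℝ, 0 ≤ q M v := by
  unfold q; rw [posSemidef_iff_dotProduct_mulVec]
  simp [star_trivial]

lemma psd_quad {M : Matrix n n ℝ} (h : M.PosSemidef) (v : n → ℝ) : 0 ≤ q M v :=
  (psd_iff.mp h).2 v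

lemma herm_symm {M : Matrix n n ℝ} (h : M.IsHermitian) (i j : n) : M i j = M j i := by
  conv_lhs => rw [← h.apply i j]
  simp

lemma herm_eq_of_quad {A B : Matrix n n ℝ} (hA : A.IsHermitian) (hB : B.IsHermitian)
    (h : ∀ v, q A v = q B v) : A = B := by
  have key : ∀ (M : Matrix n n ℝ), M.IsHermitian → (∀ v, q M v = 0) → M = 0 := by
    intro M hM hq
    have hdiag : ∀ i, M i i = 0 := by
      intro i
      have := hq (Pi.single i 1)
      simpa [q, mulVec_single, single_dotProduct] using this
    ext i j
    have h2 := hq (Pi.single i 1 + Pi.single j 1)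
    simp only [q, mulVec_add, dotProduct_add, add_dotProduct, mulVec_single_one, col_apply,
      single_dotProduct, one_mul, mul_one] at h2
    show M i j = 0
    by_cases hij : i = j
    · subst hij; exact hdiag i
    · linarith [h2, hdiag i, hdiag j, herm_symm hM i j]
  have hAB : (A - B).IsHermitian := hA.sub hB
  have : A - B = 0 := by
    refine key _ hAB fun v => ?_
    simp [q, sub_mulVec, dotProduct_sub, h v]
  have := sub_eq_zero.mp this
  exact this


lemma psd_smul {M : Matrix n n ℝ} (hM : M.PosSemidef) {c : ℝ} (hc : 0 ≤ c) :
    (c • M).PosSemidef := by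
  refine ⟨?_, fun x => ?_⟩
  · unfold Matrix.IsHermitian
    rw [conjTranspose_smul, hM.1]
    simp
  · exact (hM.smul hc).2 x

lemma sqrt_mono {A B : Matrix n n ℝ} (hA : A.PosSemidef) (hB : B.PosSemidef)
    (h : (B - A).PosSemidef) : (hB.sqrt - hA.sqrt).PosSemidef := by
  set S := hB.sqrt - hA.sqrt with hSdef
  have hSh : S.IsHermitian := hB.posSemidef_sqrt.1.sub hA.posSemidef_sqrt.1
  refine hSh.posSemidef_iff_eigenvalues_nonneg.mpr fun i => ?_
  by_contra hneg
  push_neg at hneg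
  rw [Pi.zero_apply] at hneg
  set lam := hSh.eigenvalues i with hlam
  set x : n → ℝ := ⇑(hSh.eigenvectorBasis i) with hxdef
  have hx : S *ᵥ x = lam • x := hSh.mulVec_eigenvectorBasis i
  have hx0 : x ≠ 0 := by
    intro h0
    apply hSh.eigenvectorBasis.orthonormal.ne_zero i
    ext j
    exact congrFun h0 j
  have hdecomp : B - A = hB.sqrt * S + S * hA.sqrt := by
    rw [hSdef, mul_sub, sub_mul, hB.sqrt_mul_self, hA.sqrt_mul_self]
    noncomm_ring
  have hST : Sᵀ = S := by
    rw [← conjTranspose_eq_transpose_of_trivial, hSh]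
  have hkey : q (B - A) x = lam * (q hB.sqrt x + q hA.sqrt x) := by
    rw [hdecomp]
    unfold q
    rw [add_mulVec, dotProduct_add, ← mulVec_mulVec, ← mulVec_mulVec, hx,
      mulVec_smul, dotProduct_smul, dotProduct_mulVec x S, ← mulVec_transpose, hST, hx,
      smul_dotProduct]
    simp [smul_eq_mul]
    ring
  have h0 : 0 ≤ lam * (q hB.sqrt x + q hA.sqrt x) := hkey ▸ psd_quad h x
  have hq1 : 0 ≤ q hB.sqrt x := psd_quad hB.posSemidef_sqrt x
  have hq2 : 0 ≤ q hA.sqrt x := psd_quad hA.posSemidef_sqrt x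
  have hq1' : q hB.sqrt x = 0 := by nlinarith
  have hq2' : q hA.sqrt x = 0 := by nlinarith
  have hB0 : hB.sqrt *ᵥ x = 0 := by
    refine (hB.posSemidef_sqrt.dotProduct_mulVec_zero_iff x).mp ?_
    simpa [star_trivial] using hq1'
  have hA0 : hA.sqrt *ᵥ x = 0 := by
    refine (hA.posSemidef_sqrt.dotProduct_mulVec_zero_iff x).mp ?_
    simpa [star_trivial] using hq2'
  have : lam • x = 0 := by
    rw [← hx, hSdef, sub_mulVec, hB0, hA0, sub_zero]
  rcases smul_eq_zero.mp this with h' | h'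
  · exact absurd h' (by linarith [hneg])
  · exact hx0 h'

lemma sqrt_le_sqrt_of_sq {A B : Matrix n n ℝ} (hA : A.PosSemidef) (hB : B.PosSemidef)
    (h : (B * B - A * A).PosSemidef) : (B - A).PosSemidef := by
  have hA2 : (A * A).PosSemidef := by simpa [pow_two] using hA.pow 2
  have hB2 : (B * B).PosSemidef := by simpa [pow_two] using hB.pow 2
  have hmain := sqrt_mono hA2 hB2 h
  rwa [show hB2.sqrt = B from (hB.eq_sqrt_of_sq_eq hB2 (by rw [pow_two])).symm,
    show hA2.sqrt = A from (hA.eq_sqrt_of_sq_eq hA2 (by rw [pow_two])).symm] at hmain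


lemma conj_eig_psd {M : Matrix n n ℝ} (hM : M.IsHermitian) {f : n → ℝ}
    (hf : ∀ i, 0 ≤ f i)
    (key : M = (hM.eigenvectorUnitary : Matrix n n ℝ) * diagonal f *
      star (hM.eigenvectorUnitary : Matrix n n ℝ)) : M.PosSemidef := by
  rw [key, star_eq_conjTranspose]
  exact (PosSemidef.diagonal hf).mul_mul_conjTranspose_same _

lemma spectral_real {M : Matrix n n ℝ} (hM : M.IsHermitian) :
    M = (hM.eigenvectorUnitary : Matrix n n ℝ) * diagonal hM.eigenvalues *
      star (hM.eigenvectorUnitary : Matrix n n ℝ) := by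
  have := hM.spectral_theorem
  rwa [show RCLike.ofReal ∘ hM.eigenvalues = hM.eigenvalues from
    funext fun i => rfl] at this

lemma smul_one_conj {M : Matrix n n ℝ} (hM : M.IsHermitian) (c : ℝ) :
    (c • 1 : Matrix n n ℝ) = (hM.eigenvectorUnitary : Matrix n n ℝ) * (c • 1) *
      star (hM.eigenvectorUnitary : Matrix n n ℝ) := by
  rw [Matrix.mul_smul, Matrix.smul_mul, mul_one,
    mem_unitaryGroup_iff.mp hM.eigenvectorUnitary.2]

lemma sub_smul_one_psd {M : Matrix n n ℝ} (hM : M.IsHermitian) {c : ℝ}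
    (h : ∀ i, c ≤ hM.eigenvalues i) : (M - c • 1).PosSemidef := by
  have hherm : (M - c • 1).IsHermitian := by
    refine hM.sub ?_
    unfold Matrix.IsHermitian
    rw [conjTranspose_smul, conjTranspose_one]
    simp
  refine ⟨hherm, fun x => ?_⟩
  have key : M - c • 1 = (hM.eigenvectorUnitary : Matrix n n ℝ) *
      diagonal (fun i => hM.eigenvalues i - c) *
      star (hM.eigenvectorUnitary : Matrix n n ℝ) := by
    conv_lhs => rw [spectral_real hM, smul_one_conj hM c]
    rw [← Matrix.sub_mul, ← Matrix.mul_sub, smul_one_eq_diagonal, diagonal_sub]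
  rw [key, star_eq_conjTranspose]
  exact ((PosSemidef.diagonal fun i => sub_nonneg.2 (h i)).mul_mul_conjTranspose_same _).2 x

lemma smul_one_sub_psd {M : Matrix n n ℝ} (hM : M.IsHermitian) {c : ℝ}
    (h : ∀ i, hM.eigenvalues i ≤ c) : (c • 1 - M).PosSemidef := by
  have hherm : ((c:ℝ) • 1 - M).IsHermitian := by
    refine IsHermitian.sub ?_ hM
    unfold Matrix.IsHermitian
    rw [conjTranspose_smul, conjTranspose_one]
    simp
  refine ⟨hherm, fun x => ?_⟩
  have key : c • 1 - M = (hM.eigenvectorUnitary : Matrix n n ℝ) *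
      diagonal (fun i => c - hM.eigenvalues i) *
      star (hM.eigenvectorUnitary : Matrix n n ℝ) := by
    conv_lhs => rw [spectral_real hM, smul_one_conj hM c]
    rw [← Matrix.sub_mul, ← Matrix.mul_sub, smul_one_eq_diagonal, diagonal_sub]
  rw [key, star_eq_conjTranspose]
  exact ((PosSemidef.diagonal fun i => sub_nonneg.2 (h i)).mul_mul_conjTranspose_same _).2 x

lemma exists_smul_one_le [Nonempty n] {M : Matrix n n ℝ} (hM : M.PosDef) :
    ∃ c : ℝ, 0 < c ∧ (M - c • 1).PosSemidef := by
  refine ⟨Finset.univ.inf' Finset.univ_nonempty hM.1.eigenvalues, ?_, ?_⟩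
  · rw [Finset.lt_inf'_iff]
    exact fun i _ => hM.eigenvalues_pos i
  · exact sub_smul_one_psd hM.1 fun i => Finset.inf'_le _ (Finset.mem_univ i)

lemma exists_le_smul_one [Nonempty n] {M : Matrix n n ℝ} (hM : M.PosSemidef) :
    ∃ d : ℝ, 0 < d ∧ (d • 1 - M).PosSemidef := by
  refine ⟨Finset.univ.sup' Finset.univ_nonempty hM.1.eigenvalues + 1, ?_, ?_⟩
  · have : 0 ≤ Finset.univ.sup' Finset.univ_nonempty hM.1.eigenvalues := by
      obtain ⟨i⟩ := ‹Nonempty n›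
      exact le_trans (hM.eigenvalues_nonneg i) (Finset.le_sup' _ (Finset.mem_univ i))
    linarith
  · refine smul_one_sub_psd hM.1 fun i => ?_
    linarith [Finset.le_sup' hM.1.eigenvalues (Finset.mem_univ i)]


lemma psd_trans {A B C : Matrix n n ℝ} (h1 : (B - A).PosSemidef) (h2 : (C - B).PosSemidef) :
    (C - A).PosSemidef := by
  have := h2.add h1
  rwa [sub_add_sub_cancel] at this

lemma conj_psd {A B : Matrix n n ℝ} (h : (B - A).PosSemidef) (T : Matrix n n ℝ) :
    (Tᴴ * B * T - Tᴴ * A * T).PosSemidef := by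
  have : Tᴴ * B * T - Tᴴ * A * T = Tᴴ * (B - A) * T := by
    rw [Matrix.mul_sub, Matrix.sub_mul]
  rw [this]
  exact h.conjTranspose_mul_mul_same T

lemma quad_mono {A B : Matrix n n ℝ} (h : (B - A).PosSemidef) (v : n → ℝ) :
    q A v ≤ q B v := by
  have := psd_quad h v
  unfold q at this ⊢
  rw [sub_mulVec, dotProduct_sub] at this
  linarith

lemma quad_smul (c : ℝ) (M : Matrix n n ℝ) (v : n → ℝ) : q (c • M) v = c * q M v := by
  unfold q
  rw [smul_mulVec, dotProduct_smul, smul_eq_mul]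

lemma quad_one (v : n → ℝ) : q (1 : Matrix n n ℝ) v = v ⬝ᵥ v := by
  unfold q; rw [one_mulVec]

lemma posDef_smul_one {c : ℝ} (hc : 0 < c) : ((c • 1 : Matrix n n ℝ)).PosDef := by
  rw [smul_one_eq_diagonal]
  exact PosDef.diagonal fun _ => hc

lemma sqrt_smul {M : Matrix n n ℝ} (hM : M.PosSemidef) {c : ℝ} (hc : 0 ≤ c) :
    (psd_smul hM hc).sqrt = Real.sqrt c • hM.sqrt := by
  refine ((psd_smul hM.posSemidef_sqrt (Real.sqrt_nonneg c)).eq_sqrt_of_sq_eq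
    (psd_smul hM hc) ?_).symm
  rw [pow_two, smul_mul_smul_comm, Real.mul_self_sqrt hc, hM.sqrt_mul_self]

lemma posDef_of_psd_isUnit {M : Matrix n n ℝ} (hM : M.PosSemidef) (hU : IsUnit M) :
    M.PosDef := by
  exact hM.posDef_iff_isUnit.mpr hU

lemma posDef_conjTranspose_mul_self' {T : Matrix n n ℝ} (hT : IsUnit T) :
    (Tᴴ * T).PosDef := by
  refine posDef_of_psd_isUnit (posSemidef_conjTranspose_mul_self T) ?_
  have hdet : IsUnit T.det := (isUnit_iff_isUnit_det T).mp hT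
  refine (isUnit_iff_isUnit_det _).mpr ?_
  rw [det_mul, det_conjTranspose]
  simpa [star_trivial] using hdet.mul hdet

/-- the iteration map -/
noncomputable def stepS (T : Matrix n n ℝ) (X : {X : Matrix n n ℝ // X.PosSemidef}) :
    {X : Matrix n n ℝ // X.PosSemidef} :=
  ⟨(X.2.conjTranspose_mul_mul_same T).sqrt,
   (X.2.conjTranspose_mul_mul_same T).posSemidef_sqrt⟩

lemma stepS_sq (T : Matrix n n ℝ) (X : {X : Matrix n n ℝ // X.PosSemidef}) :
    (stepS T X).1 * (stepS T X).1 = Tᴴ * X.1 * T :=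
  (X.2.conjTranspose_mul_mul_same T).sqrt_mul_self

lemma stepS_mono (T : Matrix n n ℝ) {X Y : {X : Matrix n n ℝ // X.PosSemidef}}
    (h : (Y.1 - X.1).PosSemidef) : ((stepS T Y).1 - (stepS T X).1).PosSemidef := by
  refine sqrt_le_sqrt_of_sq (stepS T X).2 (stepS T Y).2 ?_
  rw [stepS_sq, stepS_sq]
  exact conj_psd h T

noncomputable def seqS (T : Matrix n n ℝ) (X0 : {X : Matrix n n ℝ // X.PosSemidef}) :
    ℕ → {X : Matrix n n ℝ // X.PosSemidef}
  | 0 => X0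
  | (k+1) => stepS T (seqS T X0 k)


/-! ### the scalar sequence `l ^ (2⁻ᵏ)` -/

noncomputable def mu (l : ℝ) (k : ℕ) : ℝ := Real.exp (Real.log l * (1/2)^k)

lemma mu_pos (l : ℝ) (k : ℕ) : 0 < mu l k := Real.exp_pos _

lemma mu_zero {l : ℝ} (hl : 0 < l) : mu l 0 = l := by
  simp [mu, Real.exp_log hl]

lemma mu_sqrt (l : ℝ) (k : ℕ) : Real.sqrt (mu l k) = mu l (k+1) := by
  rw [Real.sqrt_eq_rpow, mu, Real.rpow_def_of_pos (Real.exp_pos _), Real.log_exp,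
    mu, pow_succ, mul_assoc]

lemma mu_sq (l : ℝ) (k : ℕ) : mu l (k+1) * mu l (k+1) = mu l k := by
  rw [← mu_sqrt, Real.mul_self_sqrt (mu_pos l k).le]

lemma mu_one_le {l : ℝ} (hl : 1 ≤ l) (k : ℕ) : 1 ≤ mu l k := by
  rw [← Real.exp_zero, mu]
  exact Real.exp_le_exp.mpr (mul_nonneg (Real.log_nonneg hl) (by positivity))

open Filter in
lemma mu_tendsto (l : ℝ) : Filter.Tendsto (mu l) Filter.atTop (nhds 1) := by
  have h1 : Filter.Tendsto (fun k : ℕ => Real.log l * (1/2)^k) Filter.atTop (nhds 0) := by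
    have := tendsto_pow_atTop_nhds_zero_of_lt_one (by norm_num : (0:ℝ) ≤ 1/2) (by norm_num)
    simpa using this.const_mul (Real.log l)
  have h2 := (Real.continuous_exp.tendsto 0).comp h1
  rw [Real.exp_zero] at h2
  exact h2.congr fun k => rfl

/-! ### uniqueness -/

lemma le_fixed {T A B : Matrix n n ℝ} [Nonempty n] (hA : A.PosDef) (hB : B.PosDef)
    (hAe : Tᴴ * A * T = A * A) (hBe : Tᴴ * B * T = B * B) : (B - A).PosSemidef := by
  obtain ⟨a, ha, hale⟩ := exists_le_smul_one hA.posSemidef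
  obtain ⟨b, hb, hble⟩ := exists_smul_one_le hB
  set l := max (a / b) 1 with hl
  have hl1 : 1 ≤ l := le_max_right _ _
  have hl0 : 0 < l := lt_of_lt_of_le one_pos hl1
  have hab : a ≤ l * b := by
    have : a / b ≤ l := le_max_left _ _
    calc a = (a / b) * b := by field_simp
    _ ≤ l * b := by nlinarith
  have hbase : (l • B - A).PosSemidef := by
    have h1 : (l • (B - b • 1)).PosSemidef := psd_smul hble (by linarith)
    have h2 : (((l * b - a) • 1 : Matrix n n ℝ)).PosSemidef :=
      psd_smul Matrix.PosSemidef.one (by linarith)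
    have h3 := (h1.add h2).add hale
    have heq : l • (B - b • 1) + (l * b - a) • (1 : Matrix n n ℝ) + (a • 1 - A)
        = l • B - A := by
      rw [smul_sub, smul_smul, sub_smul]
      abel
    rwa [heq] at h3
  have hiter : ∀ k, (mu l k • B - A).PosSemidef := by
    intro k
    induction k with
    | zero => rwa [mu_zero hl0]
    | succ k ih =>
      refine sqrt_le_sqrt_of_sq hA.posSemidef (psd_smul hB.posSemidef (mu_pos l (k+1)).le) ?_
      have key : (mu l (k+1) • B) * (mu l (k+1) • B) - A * A
          = Tᴴ * (mu l k • B - A) * T := by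
        rw [smul_mul_smul_comm, mu_sq, ← hBe, ← hAe, Matrix.mul_sub, Matrix.sub_mul]
        congr 1
        rw [Matrix.mul_smul, Matrix.smul_mul]
      rw [key]
      exact ih.conjTranspose_mul_mul_same T
  refine psd_iff.mpr ⟨hB.1.sub hA.1, fun v => ?_⟩
  have hlim : Filter.Tendsto (fun k => mu l k * q B v) Filter.atTop (nhds (q B v)) := by
    simpa using (mu_tendsto l).mul_const (q B v)
  have hle : q A v ≤ q B v := by
    refine ge_of_tendsto hlim (Filter.Eventually.of_forall fun k => ?_)
    have := quad_mono (hiter k) v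
    rwa [quad_smul] at this
  have : q (B - A) v = q B v - q A v := by
    unfold q; rw [sub_mulVec, dotProduct_sub]
  linarith [this]


/-! ### polarization / limit helpers -/

lemma quad_single (M : Matrix n n ℝ) (i : n) : q M (Pi.single i 1) = M i i := by
  simp [q, mulVec_single, single_dotProduct]

lemma quad_single_add {M : Matrix n n ℝ} (hM : M.IsHermitian) (i j : n) :
    q M (Pi.single i 1 + Pi.single j 1)
      = q M (Pi.single i 1) + q M (Pi.single j 1) + 2 * M i j := by
  simp only [q, mulVec_add, dotProduct_add, add_dotProduct, mulVec_single_one, col_apply,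
    single_dotProduct, mul_one, one_mul]
  linarith [herm_symm hM i j]

lemma polarization {M : Matrix n n ℝ} (hM : M.IsHermitian) (i j : n) :
    M i j = (q M (Pi.single i 1 + Pi.single j 1)
      - q M (Pi.single i 1) - q M (Pi.single j 1)) / 2 := by
  rw [quad_single_add hM i j]
  ring

lemma quad_sub (M N : Matrix n n ℝ) (v : n → ℝ) : q (M - N) v = q M v - q N v := by
  unfold q; rw [sub_mulVec, dotProduct_sub]

open Filter in
lemma tendsto_quad {Y : ℕ → Matrix n n ℝ} {A : Matrix n n ℝ}
    (h : ∀ i j, Filter.Tendsto (fun k => Y k i j) Filter.atTop (nhds (A i j)))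
    (v w : n → ℝ) :
    Filter.Tendsto (fun k => v ⬝ᵥ (Y k *ᵥ w)) Filter.atTop (nhds (v ⬝ᵥ (A *ᵥ w))) := by
  have hrw : ∀ (M : Matrix n n ℝ), v ⬝ᵥ (M *ᵥ w) = ∑ i, v i * ∑ j, M i j * w j := fun M => rfl
  simp only [hrw]
  exact tendsto_finset_sum _ fun i _ =>
    (tendsto_finset_sum _ fun j _ => (h i j).mul_const (w j)).const_mul (v i)

/-! ### existence -/

open Filter in
lemma exists_fixed [Nonempty n] {T : Matrix n n ℝ} (hT : IsUnit T) :
    ∃ A : Matrix n n ℝ, A.PosDef ∧ Tᴴ * A * T = A * A := by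
  classical
  set G := Tᴴ * T with hGdef
  have hGpd : G.PosDef := posDef_conjTranspose_mul_self' hT
  obtain ⟨c, hc, hcle⟩ := exists_smul_one_le hGpd            -- (G - c•1) psd
  obtain ⟨m, hm, hmle⟩ := exists_le_smul_one hGpd.posSemidef -- (m•1 - G) psd
  set d := max m c with hddef
  have hcd : c ≤ d := le_max_right _ _
  have hd : 0 < d := lt_of_lt_of_le hc hcd
  have hdG : ((d • 1 : Matrix n n ℝ) - G).PosSemidef := by
    have h2 : ((d • 1 : Matrix n n ℝ) - m • 1).PosSemidef := by
      rw [← sub_smul]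
      exact psd_smul Matrix.PosSemidef.one (by simp [hddef, le_max_left])
    exact psd_trans hmle h2
  set X0 : {X : Matrix n n ℝ // X.PosSemidef} :=
    ⟨c • 1, (posDef_smul_one hc).posSemidef⟩ with hX0
  set Z0 : {X : Matrix n n ℝ // X.PosSemidef} :=
    ⟨d • 1, (posDef_smul_one hd).posSemidef⟩ with hZ0
  set Y := seqS T X0 with hYdef
  set Z := seqS T Z0 with hZdef
  -- conjugation of scalar matrices
  have hconj_smul : ∀ e : ℝ, Tᴴ * (e • 1) * T = e • G := fun e => by
    rw [Matrix.mul_smul, Matrix.smul_mul, mul_one]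
  have hsmul_sq : ∀ e : ℝ, ((e • 1 : Matrix n n ℝ)) * (e • 1) = (e * e) • 1 := fun e => by
    rw [smul_mul_smul_comm, one_mul]
  -- basic monotonicity
  have hbaseY : ((Y 1).1 - (Y 0).1).PosSemidef := by
    show ((stepS T X0).1 - X0.1).PosSemidef
    refine sqrt_le_sqrt_of_sq X0.2 (stepS T X0).2 ?_
    rw [stepS_sq]
    show (Tᴴ * (c • 1) * T - (c • 1) * (c • 1)).PosSemidef
    rw [hconj_smul, hsmul_sq]
    have heq : c • G - (c * c) • (1 : Matrix n n ℝ) = c • (G - c • 1) := by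
      rw [smul_sub, smul_smul]
    rw [heq]
    exact psd_smul hcle hc.le
  have hbaseZ : ((Z 0).1 - (Z 1).1).PosSemidef := by
    show (Z0.1 - (stepS T Z0).1).PosSemidef
    refine sqrt_le_sqrt_of_sq (stepS T Z0).2 Z0.2 ?_
    rw [stepS_sq]
    show ((d • 1) * (d • 1) - Tᴴ * (d • 1) * T).PosSemidef
    rw [hconj_smul, hsmul_sq]
    have heq : (d * d) • (1 : Matrix n n ℝ) - d • G = d • (d • 1 - G) := by
      rw [smul_sub, smul_smul]
    rw [heq]
    exact psd_smul hdG hd.le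
  have hYmono : ∀ k, ((Y (k+1)).1 - (Y k).1).PosSemidef := by
    intro k; induction k with
    | zero => exact hbaseY
    | succ k ih => exact stepS_mono T ih
  have hZanti : ∀ k, ((Z k).1 - (Z (k+1)).1).PosSemidef := by
    intro k; induction k with
    | zero => exact hbaseZ
    | succ k ih => exact stepS_mono T ih
  have hYZ : ∀ k, ((Z k).1 - (Y k).1).PosSemidef := by
    intro k; induction k with
    | zero =>
      show ((d • 1 : Matrix n n ℝ) - c • 1).PosSemidef
      rw [← sub_smul]
      exact psd_smul Matrix.PosSemidef.one (by linarith)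
    | succ k ih => exact stepS_mono T ih
  have hZchain : ∀ k l, k ≤ l → ((Z k).1 - (Z l).1).PosSemidef := by
    intro k l hkl
    induction l, hkl using Nat.le_induction with
    | base => simpa [sub_self] using Matrix.PosSemidef.zero
    | succ l hkl ih => exact psd_trans (hZanti l) ih
  have hYbd : ∀ k, ((Z 0).1 - (Y k).1).PosSemidef :=
    fun k => psd_trans (hYZ k) (hZchain 0 k (Nat.zero_le k))
  -- contraction
  set l := d / c with hldef
  have hl1 : 1 ≤ l := (one_le_div hc).mpr hcd
  have hcontr : ∀ k, (mu l k • (Y k).1 - (Z k).1).PosSemidef := by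
    intro k; induction k with
    | zero =>
      have heq : mu l 0 • (Y 0).1 - (Z 0).1 = (0 : Matrix n n ℝ) := by
        show mu l 0 • (c • 1) - (d • 1 : Matrix n n ℝ) = 0
        rw [mu_zero (lt_of_lt_of_le one_pos hl1), smul_smul, hldef,
          div_mul_cancel₀ _ hc.ne', sub_self]
      rw [heq]; exact Matrix.PosSemidef.zero
    | succ k ih =>
      refine sqrt_le_sqrt_of_sq (Z (k+1)).2 (psd_smul (Y (k+1)).2 (mu_pos l (k+1)).le) ?_
      have key : (mu l (k+1) • (Y (k+1)).1) * (mu l (k+1) • (Y (k+1)).1)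
          - (Z (k+1)).1 * (Z (k+1)).1
          = Tᴴ * (mu l k • (Y k).1 - (Z k).1) * T := by
        show (mu l (k+1) • (stepS T (Y k)).1) * (mu l (k+1) • (stepS T (Y k)).1)
          - (stepS T (Z k)).1 * (stepS T (Z k)).1 = _
        rw [smul_mul_smul_comm, mu_sq, stepS_sq, stepS_sq, Matrix.mul_sub, Matrix.sub_mul]
        congr 1
        rw [Matrix.mul_smul, Matrix.smul_mul]
      rw [key]
      exact ih.conjTranspose_mul_mul_same T
  -- quadratic-form limits
  have hmono : ∀ v, Monotone fun k => q (Y k).1 v :=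
    fun v => monotone_nat_of_le_succ fun k => quad_mono (hYmono k) v
  have hbdd : ∀ v, BddAbove (Set.range fun k => q (Y k).1 v) := by
    intro v
    refine ⟨q (Z 0).1 v, ?_⟩
    rintro x ⟨k, rfl⟩
    exact quad_mono (hYbd k) v
  set L : (n → ℝ) → ℝ := fun v => ⨆ k, q (Y k).1 v with hLdef
  have hLt : ∀ v, Tendsto (fun k => q (Y k).1 v) atTop (nhds (L v)) :=
    fun v => tendsto_atTop_ciSup (hmono v) (hbdd v)
  have hqYle : ∀ k v, q (Y k).1 v ≤ L v := fun k v => le_ciSup (hbdd v) k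
  -- the limit matrix
  set A : Matrix n n ℝ := Matrix.of fun i j =>
    (L (Pi.single i 1 + Pi.single j 1) - L (Pi.single i 1) - L (Pi.single j 1)) / 2 with hAdef
  have hAentry : ∀ i j, Tendsto (fun k => (Y k).1 i j) atTop (nhds (A i j)) := by
    intro i j
    have h := (((hLt (Pi.single i 1 + Pi.single j 1)).sub (hLt (Pi.single i 1))).sub
      (hLt (Pi.single j 1))).div_const (2:ℝ)
    exact h.congr fun k => (polarization (Y k).2.1 i j).symm
  have hAq : ∀ v w, Tendsto (fun k => v ⬝ᵥ ((Y k).1 *ᵥ w)) atTop (nhds (v ⬝ᵥ (A *ᵥ w))) :=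
    fun v w => tendsto_quad hAentry v w
  have hAL : ∀ v, q A v = L v := fun v => tendsto_nhds_unique (hAq v v) (hLt v)
  have hAherm : A.IsHermitian := by
    have hsym : ∀ i j, A i j = A j i := fun i j =>
      tendsto_nhds_unique (hAentry i j)
        ((hAentry j i).congr fun k => herm_symm (Y k).2.1 j i)
    exact Matrix.ext fun i j => by rw [conjTranspose_apply, star_trivial, hsym j i]
  -- Z converges to the same limit
  have hZt : ∀ v, Tendsto (fun k => q (Z k).1 v) atTop (nhds (L v)) := by
    intro v
    have hD : 0 ≤ q (Z 0).1 v := psd_quad (Z 0).2 v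
    have hup : Tendsto (fun k => q (Y k).1 v + (mu l k - 1) * q (Z 0).1 v) atTop
        (nhds (L v)) := by
      have := (hLt v).add ((((mu_tendsto l).sub_const 1)).mul_const (q (Z 0).1 v))
      simpa using this
    refine tendsto_of_tendsto_of_tendsto_of_le_of_le (hLt v) hup
      (fun k => quad_mono (hYZ k) v) (fun k => ?_)
    have h1 : q (Z k).1 v ≤ mu l k * q (Y k).1 v := by
      have := quad_mono (hcontr k) v
      rwa [quad_smul] at this
    have h2 : q (Y k).1 v ≤ q (Z 0).1 v := quad_mono (hYbd k) v
    have h3 : 0 ≤ q (Y k).1 v := psd_quad (Y k).2 v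
    have h4 : 1 ≤ mu l k := mu_one_le hl1 k
    nlinarith
  -- A is between the sequences
  have hYleA : ∀ k, (A - (Y k).1).PosSemidef := by
    intro k
    refine psd_iff.mpr ⟨hAherm.sub (Y k).2.1, fun v => ?_⟩
    rw [quad_sub, hAL]
    linarith [hqYle k v]
  have hAleZ : ∀ k, ((Z k).1 - A).PosSemidef := by
    intro k
    refine psd_iff.mpr ⟨(Z k).2.1.sub hAherm, fun v => ?_⟩
    rw [quad_sub, hAL]
    have : L v ≤ q (Z k).1 v := by
      refine le_of_tendsto (hZt v) (eventually_atTop.mpr ⟨k, fun m hm => ?_⟩)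
      exact quad_mono (hZchain k m hm) v
    linarith
  have hApsd : A.PosSemidef := psd_iff.mpr ⟨hAherm, fun v => by
    have h0 : 0 ≤ q (Y 0).1 v := psd_quad (Y 0).2 v
    rw [hAL]; linarith [hqYle 0 v]⟩
  have hApd : A.PosDef := by
    have h := hYleA 0
    have h' : ((A - c • 1) + c • 1).PosDef :=
      Matrix.PosDef.posSemidef_add h (posDef_smul_one hc)
    rwa [sub_add_cancel] at h'
  -- fixed point
  set FA := stepS T ⟨A, hApsd⟩ with hFAdef
  have hFA_lb : ∀ k, (FA.1 - (Y (k+1)).1).PosSemidef := fun k => stepS_mono T (hYleA k)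
  have hFA_ub : ∀ k, ((Z (k+1)).1 - FA.1).PosSemidef := fun k => stepS_mono T (hAleZ k)
  have hFAq : ∀ v, q FA.1 v = q A v := by
    intro v
    rw [hAL]
    refine le_antisymm ?_ ?_
    · refine ge_of_tendsto ((hZt v).comp (tendsto_add_atTop_nat 1))
        (Eventually.of_forall fun k => ?_)
      have := quad_mono (hFA_ub k) v
      exact this
    · refine le_of_tendsto ((hLt v).comp (tendsto_add_atTop_nat 1))
        (Eventually.of_forall fun k => ?_)
      exact quad_mono (hFA_lb k) v
  have hFAeq : FA.1 = A := herm_eq_of_quad FA.2.1 hAherm hFAq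
  have hsq := stepS_sq T ⟨A, hApsd⟩
  rw [hFAeq] at hsq
  exact ⟨A, hApd, hsq.symm⟩

end Bushell

/-- **Bushell's theorem.** For every invertible real `r × r` matrix `T` there exists a
unique real symmetric positive definite `r × r` matrix `A` such that `Tᵀ * A * T = A * A`. -/
theorem bushell_fixed_point (r : ℕ) (hr : 0 < r)
    (T : Matrix (Fin r) (Fin r) ℝ) (hT : IsUnit T) :
    ∃! A : Matrix (Fin r) (Fin r) ℝ, A.PosDef ∧ Tᵀ * A * T = A * A := by
  have : Nonempty (Fin r) := ⟨⟨0, hr⟩⟩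
  have hTt : Tᵀ = Tᴴ := (conjTranspose_eq_transpose_of_trivial T).symm
  obtain ⟨A, hApd, hAeq⟩ := Bushell.exists_fixed hT
  refine ⟨A, ⟨hApd, by rw [hTt]; exact hAeq⟩, ?_⟩
  rintro B ⟨hBpd, hBeq⟩
  rw [hTt] at hBeq
  have h1 := Bushell.le_fixed hApd hBpd hAeq hBeq
  have h2 := Bushell.le_fixed hBpd hApd hBeq hAeq
  exact Bushell.herm_eq_of_quad hBpd.1 hApd.1 fun v =>
    le_antisymm (Bushell.quad_mono h2 v) (Bushell.quad_mono h1 v)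
end

section
/- For real symmetric positive definite r×r matrices x and y define d(x,y) = log(λ_max(x,y) · λ_max(y,x)), where λ_max(x,y) is the greatest eigenvalue of y^{-1/2} x y^{-1/2}. Then for all real symmetric positive definite x, y, z: (a) d(x,y) ≥ 0; (b) d(x,y) = d(y,x); (c) d(x,z) ≤ d(x,y) + d(y,z); (d) d(x,y) = 0 if and only if there exists λ > 0 with x = λ•y. -/
open Matrix

open Classical in
/-- The inverse of the positive semidefinite square root of a matrix
(junk value `1` if the matrix is not positive semidefinite). -/
noncomputable def Matrix.invSqrt {r : ℕ} (y : Matrix (Fin r) (Fin r) ℝ) :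
    Matrix (Fin r) (Fin r) ℝ :=
  if hy : y.PosSemidef then
    ((hy.1.eigenvectorUnitary : Matrix (Fin r) (Fin r) ℝ) *
      diagonal ((↑) ∘ (√·) ∘ hy.1.eigenvalues) *
      (star hy.1.eigenvectorUnitary : Matrix (Fin r) (Fin r) ℝ))⁻¹ else 1

/-- `λ_max(x,y)`: the greatest eigenvalue of `y^{-1/2} * x * y^{-1/2}`. -/
noncomputable def Matrix.lambdaMax {r : ℕ} (x y : Matrix (Fin r) (Fin r) ℝ) : ℝ :=
  sSup (spectrum ℝ (y.invSqrt * x * y.invSqrt))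

/-- The Hilbert projective metric `d(x,y) = log (λ_max(x,y) · λ_max(y,x))`. -/
noncomputable def Matrix.hilbertDist {r : ℕ} (x y : Matrix (Fin r) (Fin r) ℝ) : ℝ :=
  Real.log (x.lambdaMax y * y.lambdaMax x)

variable {r : ℕ}


private lemma psd_smul {c : ℝ} (hc : 0 ≤ c) {A : Matrix (Fin r) (Fin r) ℝ}
    (hA : A.PosSemidef) : (c • A).PosSemidef := by
  refine ⟨?_, fun v => ?_⟩
  · unfold Matrix.IsHermitian
    rw [conjTranspose_smul, star_trivial, hA.1]
  · exact (hA.smul hc).2 v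

private lemma psd_conj {c A : Matrix (Fin r) (Fin r) ℝ} (hc : c.IsHermitian)
    (hA : A.PosSemidef) : (c * A * c).PosSemidef := by
  have h := hA.mul_mul_conjTranspose_same c
  rwa [hc.eq] at h

private lemma psd_apply {A : Matrix (Fin r) (Fin r) ℝ} (h : A.PosSemidef) (v : Fin r → ℝ) :
    0 ≤ v ⬝ᵥ A *ᵥ v := by simpa using h.dotProduct_mulVec_nonneg v

private lemma pd_apply {A : Matrix (Fin r) (Fin r) ℝ} (h : A.PosDef) {v : Fin r → ℝ}
    (hv : v ≠ 0) : 0 < v ⬝ᵥ A *ᵥ v := by simpa using h.dotProduct_mulVec_pos hv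

private lemma coeff_nonneg (hr : 0 < r) {x : Matrix (Fin r) (Fin r) ℝ} (hx : x.PosDef)
    {t : ℝ} (h : (t • x).PosSemidef) : 0 ≤ t := by
  set v : Fin r → ℝ := Pi.single ⟨0, hr⟩ 1 with hv
  have hvne : v ≠ 0 := by
    intro h0
    have := congrFun h0 ⟨0, hr⟩
    simp [hv] at this
  have h1 : 0 < v ⬝ᵥ x *ᵥ v := pd_apply hx hvne
  have h2 : 0 ≤ t * (v ⬝ᵥ x *ᵥ v) := by
    have := psd_apply h v
    rwa [smul_mulVec, dotProduct_smul, smul_eq_mul] at this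
  exact nonneg_of_mul_nonneg_right (by rw [mul_comm] at h2; exact h2) h1

private lemma herm_sub_psd_iff {A : Matrix (Fin r) (Fin r) ℝ} (hA : A.IsHermitian) (c : ℝ) :
    (c • (1 : Matrix (Fin r) (Fin r) ℝ) - A).PosSemidef ↔ ∀ i, hA.eigenvalues i ≤ c := by
  set U : Matrix (Fin r) (Fin r) ℝ := (hA.eigenvectorUnitary : Matrix (Fin r) (Fin r) ℝ) with hU
  have h2 : U * star U = 1 := mem_unitaryGroup_iff.mp hA.eigenvectorUnitary.2
  have h1 : star U * U = 1 := mem_unitaryGroup_iff'.mp hA.eigenvectorUnitary.2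
  have hdiag : star U * A * U = diagonal hA.eigenvalues := by
    have := hA.conjStarAlgAut_star_eigenvectorUnitary
    simpa using this
  have key : star U * (c • (1 : Matrix (Fin r) (Fin r) ℝ) - A) * U
      = diagonal (fun i => c - hA.eigenvalues i) := by
    rw [mul_sub, sub_mul, hdiag]
    have : star U * (c • (1 : Matrix (Fin r) (Fin r) ℝ)) * U = c • (1 : Matrix (Fin r) (Fin r) ℝ) := by
      rw [mul_smul_comm, smul_mul_assoc, mul_one, h1]
    rw [this]
    have h1d : (1 : Matrix (Fin r) (Fin r) ℝ) = diagonal (fun _ => (1:ℝ)) := by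
      simp [diagonal_one]
    ext i j
    rcases eq_or_ne i j with rfl | hij
    · simp [Matrix.sub_apply, Matrix.smul_apply, Matrix.one_apply]
    · simp [Matrix.sub_apply, Matrix.smul_apply, Matrix.one_apply, hij]
  constructor
  · intro h i
    have hc := h.conjTranspose_mul_mul_same U
    rw [← star_eq_conjTranspose, key] at hc
    have := posSemidef_diagonal_iff.mp hc i
    linarith
  · intro h
    have hd : (diagonal (fun i => c - hA.eigenvalues i)).PosSemidef :=
      posSemidef_diagonal_iff.mpr (fun i => sub_nonneg.mpr (h i))
    rw [← key] at hd
    have hc := hd.mul_mul_conjTranspose_same U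
    rw [← star_eq_conjTranspose] at hc
    have e : U * (star U * (c • (1 : Matrix (Fin r) (Fin r) ℝ) - A) * U) * star U
        = c • (1 : Matrix (Fin r) (Fin r) ℝ) - A := by
      calc U * (star U * (c • (1 : Matrix (Fin r) (Fin r) ℝ) - A) * U) * star U
          = (U * star U) * (c • (1 : Matrix (Fin r) (Fin r) ℝ) - A) * (U * star U) := by
            noncomm_ring
        _ = c • (1 : Matrix (Fin r) (Fin r) ℝ) - A := by rw [h2, one_mul, mul_one]
    rwa [e] at hc

private lemma eq_zero_of_psd_neg_psd {A : Matrix (Fin r) (Fin r) ℝ}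
    (h1 : A.PosSemidef) (h2 : (-A).PosSemidef) : A = 0 := by
  have hA := h1.1
  have h0 : ((0:ℝ) • (1 : Matrix (Fin r) (Fin r) ℝ) - A).PosSemidef := by
    simpa [zero_smul, zero_sub] using h2
  have hub := (herm_sub_psd_iff hA 0).mp h0
  have hlb : ∀ i, 0 ≤ hA.eigenvalues i := h1.eigenvalues_nonneg
  have heig : (RCLike.ofReal ∘ hA.eigenvalues : Fin r → ℝ) = fun _ => 0 := by
    funext i
    simpa using le_antisymm (hub i) (hlb i)
  have := hA.spectral_theorem
  rw [heig, Matrix.diagonal_zero, Unitary.conjStarAlgAut_apply, mul_zero, zero_mul] at this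
  exact this




private lemma lambdaMax_spec (hr : 0 < r) {x y : Matrix (Fin r) (Fin r) ℝ}
    (hx : x.PosDef) (hy : y.PosDef) :
    0 < x.lambdaMax y ∧ (x.lambdaMax y • y - x).PosSemidef ∧
      ∀ c : ℝ, (c • y - x).PosSemidef → x.lambdaMax y ≤ c := by
  have hne : Nonempty (Fin r) := ⟨⟨0, hr⟩⟩
  set s := ((hy.posSemidef.1.eigenvectorUnitary : Matrix (Fin r) (Fin r) ℝ) *
      diagonal ((↑) ∘ (√·) ∘ hy.posSemidef.1.eigenvalues) *
      (star hy.posSemidef.1.eigenvectorUnitary : Matrix (Fin r) (Fin r) ℝ)) with hs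
  have hsP : s.PosSemidef := by
    have hD : (diagonal ((↑) ∘ (√·) ∘ hy.posSemidef.1.eigenvalues) :
        Matrix (Fin r) (Fin r) ℝ).PosSemidef :=
      posSemidef_diagonal_iff.mpr (fun i => by simp [Real.sqrt_nonneg])
    have := hD.mul_mul_conjTranspose_same
      (hy.posSemidef.1.eigenvectorUnitary : Matrix (Fin r) (Fin r) ℝ)
    rwa [← star_eq_conjTranspose] at this
  have hss : s * s = y := by
    have hUU : (star hy.posSemidef.1.eigenvectorUnitary : Matrix (Fin r) (Fin r) ℝ) *
        (hy.posSemidef.1.eigenvectorUnitary : Matrix (Fin r) (Fin r) ℝ) = 1 :=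
      Unitary.coe_star_mul_self _
    have hD : (diagonal ((↑) ∘ (√·) ∘ hy.posSemidef.1.eigenvalues) :
        Matrix (Fin r) (Fin r) ℝ) * diagonal ((↑) ∘ (√·) ∘ hy.posSemidef.1.eigenvalues)
        = diagonal hy.posSemidef.1.eigenvalues := by
      rw [diagonal_mul_diagonal]
      congr 1
      funext i
      simp [Real.mul_self_sqrt (hy.posSemidef.eigenvalues_nonneg i)]
    rw [hs, mul_assoc, mul_assoc, mul_assoc, ← mul_assoc (star _ : Matrix (Fin r) (Fin r) ℝ) _,
      hUU, one_mul, ← mul_assoc (diagonal _) (diagonal _), hD]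
    conv_rhs => rw [hy.posSemidef.1.spectral_theorem]
    simp [Unitary.conjStarAlgAut_apply, mul_assoc]
  have hdet : IsUnit s.det := by
    have hsq : s.det * s.det = y.det := by rw [← det_mul, hss]
    have hyd : y.det ≠ 0 := ne_of_gt hy.det_pos
    have : s.det ≠ 0 := by
      intro h0
      rw [h0, mul_zero] at hsq
      exact hyd hsq.symm
    exact isUnit_iff_ne_zero.mpr this
  have hinv : y.invSqrt = s⁻¹ := dif_pos hy.posSemidef
  set si := y.invSqrt with hsi
  have hsiherm : si.IsHermitian := by rw [hinv]; exact hsP.inv.1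
  have hsis : si * s = 1 := by rw [hinv]; exact nonsing_inv_mul s hdet
  have hssi : s * si = 1 := by rw [hinv]; exact mul_nonsing_inv s hdet
  set M := si * x * si with hM_def
  have hMpsd : M.PosSemidef := psd_conj hsiherm hx.posSemidef
  have hM : M.IsHermitian := hMpsd.1
  have hLdef : x.lambdaMax y = sSup (spectrum ℝ M) := rfl
  have hfin : (spectrum ℝ M).Finite := Matrix.finite_real_spectrum
  have hbdd : BddAbove (spectrum ℝ M) := hfin.bddAbove
  -- transfer identities
  have hsMs : s * M * s = x := by
    have : s * (si * x * si) * s = (s * si) * x * (si * s) := by noncomm_ring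
    rw [hM_def, this, hssi, hsis, one_mul, mul_one]
  have hsiysi : si * y * si = 1 := by
    have : si * (s * s) * si = (si * s) * (s * si) := by noncomm_ring
    rw [← hss, this, hsis, hssi, one_mul]
  have transfer1 : ∀ c : ℝ, s * (c • (1 : Matrix (Fin r) (Fin r) ℝ) - M) * s = c • y - x := by
    intro c
    rw [mul_sub, sub_mul, hsMs, mul_smul_comm, smul_mul_assoc, mul_one, hss]
  have transfer2 : ∀ c : ℝ, si * (c • y - x) * si = c • (1 : Matrix (Fin r) (Fin r) ℝ) - M := by
    intro c
    rw [mul_sub, sub_mul, mul_smul_comm, smul_mul_assoc, hsiysi, hM_def]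
  have hub : ∀ i, hM.eigenvalues i ≤ x.lambdaMax y := by
    intro i
    rw [hLdef]
    exact le_csSup hbdd (hM.eigenvalues_mem_spectrum_real i)
  have h2 : (x.lambdaMax y • y - x).PosSemidef := by
    have := (herm_sub_psd_iff hM (x.lambdaMax y)).mpr hub
    have := psd_conj hsP.1 this
    rwa [transfer1] at this
  have h3 : ∀ c : ℝ, (c • y - x).PosSemidef → x.lambdaMax y ≤ c := by
    intro c hc
    have := psd_conj hsiherm hc
    rw [transfer2] at this
    have hle := (herm_sub_psd_iff hM c).mp this
    rw [hLdef]
    apply csSup_le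
    · rw [hM.spectrum_real_eq_range_eigenvalues]
      exact Set.range_nonempty _
    · intro μ hμ
      rw [hM.spectrum_real_eq_range_eigenvalues] at hμ
      obtain ⟨i, rfl⟩ := hμ
      exact hle i
  have h1 : 0 < x.lambdaMax y := by
    set v : Fin r → ℝ := Pi.single ⟨0, hr⟩ 1 with hv
    have hvne : v ≠ 0 := by
      intro h0
      have := congrFun h0 ⟨0, hr⟩
      simp [hv] at this
    have hqy : 0 < v ⬝ᵥ y *ᵥ v := pd_apply hy hvne
    have hqx : 0 < v ⬝ᵥ x *ᵥ v := pd_apply hx hvne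
    have := psd_apply h2 v
    rw [sub_mulVec, dotProduct_sub, smul_mulVec, dotProduct_smul, smul_eq_mul] at this
    nlinarith
  exact ⟨h1, h2, h3⟩



private lemma chain_psd {r : ℕ} {x y z : Matrix (Fin r) (Fin r) ℝ} {a b : ℝ} (ha : 0 ≤ a)
    (h1 : (a • y - x).PosSemidef) (h2 : (b • z - y).PosSemidef) :
    ((a * b) • z - x).PosSemidef := by
  have := (psd_smul ha h2).add h1
  have e : a • (b • z - y) + (a • y - x) = (a * b) • z - x := by
    rw [smul_sub, smul_smul, sub_add_sub_cancel]
  rwa [e] at this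

private lemma one_le_prod {r : ℕ} (hr : 0 < r) {x y : Matrix (Fin r) (Fin r) ℝ}
    (hx : x.PosDef) (hy : y.PosDef) : 1 ≤ x.lambdaMax y * y.lambdaMax x := by
  obtain ⟨h1pos, h1psd, -⟩ := lambdaMax_spec hr hx hy
  obtain ⟨h2pos, h2psd, -⟩ := lambdaMax_spec hr hy hx
  have := chain_psd (le_of_lt h1pos) h1psd h2psd
  have hcoef : ((x.lambdaMax y * y.lambdaMax x - 1) • x).PosSemidef := by
    have e : (x.lambdaMax y * y.lambdaMax x) • x - x
        = (x.lambdaMax y * y.lambdaMax x - 1) • x := by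
      rw [sub_smul, one_smul]
    rwa [e] at this
  have := coeff_nonneg hr hx hcoef
  linarith


/-- The Hilbert projective metric on the cone of real symmetric positive definite
matrices is a pseudo-metric whose null pairs are exactly the proportional pairs. -/
theorem hilbert_metric_pseudometric (r : ℕ) (hr : 0 < r)
    (x y z : Matrix (Fin r) (Fin r) ℝ) (hx : x.PosDef) (hy : y.PosDef) (hz : z.PosDef) :
    0 ≤ x.hilbertDist y ∧
    x.hilbertDist y = y.hilbertDist x ∧
    x.hilbertDist z ≤ x.hilbertDist y + y.hilbertDist z ∧
    (x.hilbertDist y = 0 ↔ ∃ l : ℝ, 0 < l ∧ x = l • y) := by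
  obtain ⟨hxy_pos, hxy_psd, hxy_min⟩ := lambdaMax_spec hr hx hy
  obtain ⟨hyx_pos, hyx_psd, hyx_min⟩ := lambdaMax_spec hr hy hx
  obtain ⟨hxz_pos, hxz_psd, hxz_min⟩ := lambdaMax_spec hr hx hz
  obtain ⟨hzx_pos, hzx_psd, hzx_min⟩ := lambdaMax_spec hr hz hx
  obtain ⟨hyz_pos, hyz_psd, hyz_min⟩ := lambdaMax_spec hr hy hz
  obtain ⟨hzy_pos, hzy_psd, hzy_min⟩ := lambdaMax_spec hr hz hy
  have hprod_xy : (1:ℝ) ≤ x.lambdaMax y * y.lambdaMax x := one_le_prod hr hx hy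
  refine ⟨Real.log_nonneg hprod_xy, ?_, ?_, ?_⟩
  · show Real.log _ = Real.log _
    rw [mul_comm]
  · -- triangle
    have e1 : x.lambdaMax z ≤ x.lambdaMax y * y.lambdaMax z :=
      hxz_min _ (chain_psd (le_of_lt hxy_pos) hxy_psd hyz_psd)
    have e2 : z.lambdaMax x ≤ z.lambdaMax y * y.lambdaMax x :=
      hzx_min _ (chain_psd (le_of_lt hzy_pos) hzy_psd hyx_psd)
    show Real.log _ ≤ Real.log _ + Real.log _
    rw [← Real.log_mul (by positivity) (by positivity)]
    apply Real.log_le_log (by positivity)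
    calc x.lambdaMax z * z.lambdaMax x
        ≤ (x.lambdaMax y * y.lambdaMax z) * (z.lambdaMax y * y.lambdaMax x) := by
          apply mul_le_mul e1 e2 (le_of_lt hzx_pos) (by positivity)
      _ = x.lambdaMax y * y.lambdaMax x * (y.lambdaMax z * z.lambdaMax y) := by ring
  · constructor
    · intro h0
      have hprod : x.lambdaMax y * y.lambdaMax x = 1 := by
        have := Real.exp_log (show (0:ℝ) < x.lambdaMax y * y.lambdaMax x by positivity)
        rw [show Real.log (x.lambdaMax y * y.lambdaMax x) = 0 from h0, Real.exp_zero] at this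
        exact this.symm
      refine ⟨x.lambdaMax y, hxy_pos, ?_⟩
      have hneg : (x - x.lambdaMax y • y).PosSemidef := by
        have := psd_smul (le_of_lt hxy_pos) hyx_psd
        have e : x.lambdaMax y • (y.lambdaMax x • x - y) = x - x.lambdaMax y • y := by
          rw [smul_sub, smul_smul, hprod, one_smul]
        rwa [e] at this
      have hzero : x.lambdaMax y • y - x = 0 := by
        apply eq_zero_of_psd_neg_psd hxy_psd
        rwa [neg_sub]
      have := sub_eq_zero.mp hzero
      exact this.symm
    · rintro ⟨l, hl, rfl⟩
      have hub1 : (l • y).lambdaMax y ≤ l := by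
        apply hxy_min
        rw [sub_self]
        exact Matrix.PosSemidef.zero
      have hub2 : y.lambdaMax (l • y) ≤ 1 / l := by
        apply hyx_min
        rw [smul_smul, one_div, inv_mul_cancel₀ (ne_of_gt hl), one_smul, sub_self]
        exact Matrix.PosSemidef.zero
      have hle : (l • y).lambdaMax y * y.lambdaMax (l • y) ≤ 1 := by
        have := mul_le_mul hub1 hub2 (le_of_lt hyx_pos) (le_of_lt hl)
        rwa [mul_one_div, div_self (ne_of_gt hl)] at this
      have : (l • y).lambdaMax y * y.lambdaMax (l • y) = 1 := le_antisymm hle hprod_xy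
      show Real.log _ = 0
      rw [this, Real.log_one]
end

section
/- Let p, q ≥ 1, n = p + q, and J = diag(−I_p, I_q) ∈ M_n(ℂ). The Cayley transform C(Z) = (Z − iJ)(Z + iJ)⁻¹ is a bijection from the set {Z ∈ M_n(ℂ) : (Z − Z*)/(2i) is positive definite and Z + iJ is invertible} onto the set {γ ∈ M_n(ℂ) : J − γ*Jγ is positive definite}; its inverse is γ ↦ i(I − γ)⁻¹(I + γ)J (for every γ with J − γ*Jγ positive definite, I − γ is invertible). -/
/-!
Writing `W = Z + iJ` and `γ = C(Z)`, so that `γ W = Z − iJ`,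
one has `Wᴴ (J − γᴴ J γ) W = WᴴJW − (Z − iJ)ᴴ J (Z − iJ) = 4 Im Z`; congruence by the unit `W`
preserves positive definiteness, so `Im Z ≫ 0 ↔ J − γᴴJγ ≫ 0`. Both `γ = C(Z)` and
`Z = i (1 − γ)⁻¹ (1 + γ) J` are equivalent to the relation `(1 − γ) Z = i (1 + γ) J`, which gives
the two inverse identities. Finally a fixed vector `γ v = v` would make `v* (J − γᴴJγ) v` vanish,
so `1 − γ` is invertible on strict `J`-contractions.
-/

open Matrix ComplexOrder

namespace Matrix

variable {n : Type*} [Fintype n] [DecidableEq n] {J Z γ : Matrix n n ℂ}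

noncomputable def cayley (J Z : Matrix n n ℂ) : Matrix n n ℂ :=
  (Z - Complex.I • J) * (Z + Complex.I • J)⁻¹

noncomputable def cayleyInv (J γ : Matrix n n ℂ) : Matrix n n ℂ :=
  Complex.I • ((1 - γ)⁻¹ * (1 + γ) * J)

lemma mul_add_eq_sub_iff_one_sub_mul :
    γ * (Z + Complex.I • J) = Z - Complex.I • J ↔ (1 - γ) * Z = Complex.I • ((1 + γ) * J) := by
  have h : (1 - γ) * Z - Complex.I • ((1 + γ) * J) =
      -(γ * (Z + Complex.I • J) - (Z - Complex.I • J)) := by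
    simp only [sub_mul, add_mul, mul_add, one_mul, mul_smul_comm]
    module
  rw [← sub_eq_zero, ← sub_eq_zero (a := (1 - γ) * Z), h, neg_eq_zero]

lemma cayley_mul_add (hW : IsUnit (Z + Complex.I • J)) :
    cayley J Z * (Z + Complex.I • J) = Z - Complex.I • J := by
  rw [cayley, Matrix.mul_assoc, nonsing_inv_mul _ ((isUnit_iff_isUnit_det _).1 hW), mul_one]

lemma one_sub_mul_cayleyInv (hγ : IsUnit (1 - γ)) :
    (1 - γ) * cayleyInv J γ = Complex.I • ((1 + γ) * J) := by
  rw [cayleyInv, mul_smul_comm, ← Matrix.mul_assoc, ← Matrix.mul_assoc,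
    mul_nonsing_inv _ ((isUnit_iff_isUnit_det _).1 hγ), one_mul]

lemma cayleyInv_cayley (hW : IsUnit (Z + Complex.I • J)) (hγ : IsUnit (1 - cayley J Z)) :
    cayleyInv J (cayley J Z) = Z :=
  hγ.mul_left_cancel <| (one_sub_mul_cayleyInv hγ).trans
    (mul_add_eq_sub_iff_one_sub_mul.1 (cayley_mul_add hW)).symm

lemma isUnit_cayleyInv_add_I_smul (hJ2 : J * J = 1) (hγ : IsUnit (1 - γ)) :
    IsUnit (cayleyInv J γ + Complex.I • J) := by
  have h : (1 - γ) * (cayleyInv J γ + Complex.I • J) = (2 * Complex.I) • J := by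
    rw [mul_add, one_sub_mul_cayleyInv hγ, mul_smul_comm, add_mul, sub_mul, one_mul]
    module
  have hleft : ((2 * Complex.I)⁻¹ • (J * (1 - γ))) * (cayleyInv J γ + Complex.I • J) = 1 := by
    rw [smul_mul_assoc, Matrix.mul_assoc, h, mul_smul_comm, hJ2, smul_smul,
      inv_mul_cancel₀ (by simp), one_smul]
  exact (isUnit_iff_isUnit_det _).2 (isUnit_det_of_left_inverse hleft)

lemma cayley_cayleyInv (hJ2 : J * J = 1) (hγ : IsUnit (1 - γ)) :
    cayley J (cayleyInv J γ) = γ := by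
  have hW := isUnit_cayleyInv_add_I_smul hJ2 hγ
  refine hW.mul_right_cancel ((cayley_mul_add hW).trans ?_)
  exact (mul_add_eq_sub_iff_one_sub_mul.2 (one_sub_mul_cayleyInv hγ)).symm

lemma isUnit_one_sub_of_posDef (h : (J - γᴴ * J * γ).PosDef) : IsUnit (1 - γ) := by
  rw [isUnit_iff_isUnit_det, isUnit_iff_ne_zero]
  intro hdet
  obtain ⟨v, hv0, hv⟩ := exists_mulVec_eq_zero_iff.mpr hdet
  have hγv : γ *ᵥ v = v := by
    rwa [sub_mulVec, one_mulVec, sub_eq_zero, eq_comm] at hv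
  have : star v ⬝ᵥ (J - γᴴ * J * γ) *ᵥ v = 0 := by
    rw [sub_mulVec, dotProduct_sub, ← mulVec_mulVec, hγv, ← mulVec_mulVec,
      dotProduct_mulVec (star v) γᴴ, ← star_mulVec, hγv, sub_self]
  exact (h.dotProduct_mulVec_pos hv0).ne' this

lemma conjTranspose_mul_mul_add_sub_conjTranspose_mul_mul_sub (hJ : Jᴴ = J) (hJ2 : J * J = 1) :
    (Z + Complex.I • J)ᴴ * J * (Z + Complex.I • J) - (Z - Complex.I • J)ᴴ * J * (Z - Complex.I • J)
      = (2 * Complex.I) • (Zᴴ - Z) := by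
  simp only [conjTranspose_add, conjTranspose_sub, conjTranspose_smul, Complex.star_def,
    Complex.conj_I, hJ, add_mul, mul_add, sub_mul, mul_sub, neg_mul, smul_mul_assoc,
    mul_smul_comm, Matrix.mul_assoc, hJ2, Matrix.one_mul, Matrix.mul_one, neg_smul]
  module

lemma cayley_congruence (hJ : Jᴴ = J) (hJ2 : J * J = 1) (hW : IsUnit (Z + Complex.I • J)) :
    star ((2 : ℂ)⁻¹ • (Z + Complex.I • J)) * (J - (cayley J Z)ᴴ * J * cayley J Z) *
      ((2 : ℂ)⁻¹ • (Z + Complex.I • J)) = (2 * Complex.I)⁻¹ • (Z - Zᴴ) := by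
  set W := Z + Complex.I • J
  set γ := cayley J Z
  have hγW : γ * W = Z - Complex.I • J := cayley_mul_add hW
  have hstar : star (2⁻¹ : ℂ) = 2⁻¹ := by simp
  calc star ((2 : ℂ)⁻¹ • W) * (J - γᴴ * J * γ) * ((2 : ℂ)⁻¹ • W)
      = (4 : ℂ)⁻¹ • (Wᴴ * J * W - (γ * W)ᴴ * J * (γ * W)) := by
        rw [star_smul, hstar, star_eq_conjTranspose, smul_mul_assoc, smul_mul_assoc,
          mul_smul_comm, smul_smul]
        norm_num [mul_sub, sub_mul, Matrix.mul_assoc]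
    _ = (4 : ℂ)⁻¹ • ((2 * Complex.I) • (Zᴴ - Z)) := by
        rw [hγW, conjTranspose_mul_mul_add_sub_conjTranspose_mul_mul_sub hJ hJ2]
    _ = (2 * Complex.I)⁻¹ • (Z - Zᴴ) := by
        rw [smul_smul, ← neg_sub Z, smul_neg, ← neg_smul]
        congr 1
        field_simp
        linear_combination -4 * Complex.I_sq

lemma posDef_sub_cayley_iff (hJ : Jᴴ = J) (hJ2 : J * J = 1) (hW : IsUnit (Z + Complex.I • J)) :
    (J - (cayley J Z)ᴴ * J * cayley J Z).PosDef ↔ ((2 * Complex.I)⁻¹ • (Z - Zᴴ)).PosDef := by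
  rw [← cayley_congruence hJ hJ2 hW, IsUnit.posDef_star_left_conjugate_iff]
  exact hW.smul (Units.mk0 (2⁻¹ : ℂ) (by norm_num))

end Matrix

theorem cayley_transform_semigroup_general (p q : ℕ)
    (J : Matrix (Fin p ⊕ Fin q) (Fin p ⊕ Fin q) ℂ)
    (hJ : J = Matrix.fromBlocks (-1) 0 0 1) :
    Set.BijOn (fun Z => (Z - Complex.I • J) * (Z + Complex.I • J)⁻¹)
      {Z : Matrix (Fin p ⊕ Fin q) (Fin p ⊕ Fin q) ℂ |
        ((2 * Complex.I)⁻¹ • (Z - Zᴴ)).PosDef ∧ IsUnit (Z + Complex.I • J)}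
      {γ : Matrix (Fin p ⊕ Fin q) (Fin p ⊕ Fin q) ℂ | (J - γᴴ * J * γ).PosDef} ∧
    (∀ γ : Matrix (Fin p ⊕ Fin q) (Fin p ⊕ Fin q) ℂ,
      (J - γᴴ * J * γ).PosDef → IsUnit (1 - γ)) ∧
    Set.InvOn (fun γ => Complex.I • ((1 - γ)⁻¹ * (1 + γ) * J))
      (fun Z => (Z - Complex.I • J) * (Z + Complex.I • J)⁻¹)
      {Z : Matrix (Fin p ⊕ Fin q) (Fin p ⊕ Fin q) ℂ |
        ((2 * Complex.I)⁻¹ • (Z - Zᴴ)).PosDef ∧ IsUnit (Z + Complex.I • J)}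
      {γ : Matrix (Fin p ⊕ Fin q) (Fin p ⊕ Fin q) ℂ | (J - γᴴ * J * γ).PosDef} := by
  have hJH : Jᴴ = J := by simp [hJ, fromBlocks_conjTranspose]
  have hJ2 : J * J = 1 := by simp [hJ, fromBlocks_multiply]
  have hInv : Set.InvOn (cayleyInv J) (cayley J)
      {Z | ((2 * Complex.I)⁻¹ • (Z - Zᴴ)).PosDef ∧ IsUnit (Z + Complex.I • J)}
      {γ | (J - γᴴ * J * γ).PosDef} :=
    ⟨fun Z ⟨hZ, hW⟩ => cayleyInv_cayley hW
        (isUnit_one_sub_of_posDef ((posDef_sub_cayley_iff hJH hJ2 hW).2 hZ)),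
      fun γ hγ => cayley_cayleyInv hJ2 (isUnit_one_sub_of_posDef hγ)⟩
  refine ⟨hInv.bijOn (fun Z ⟨hZ, hW⟩ => (posDef_sub_cayley_iff hJH hJ2 hW).2 hZ) ?_,
    fun γ => isUnit_one_sub_of_posDef, hInv⟩
  intro γ hγ
  have hW := isUnit_cayleyInv_add_I_smul hJ2 (isUnit_one_sub_of_posDef hγ)
  refine ⟨(posDef_sub_cayley_iff hJH hJ2 hW).1 ?_, hW⟩
  rwa [cayley_cayleyInv hJ2 (isUnit_one_sub_of_posDef hγ)]

/-- The Cayley transform `C(Z) = (Z − iJ)(Z + iJ)⁻¹`, with `J = diag(−I_p, I_q)`, is a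
bijection from `{Z : Im Z ≫ 0 and Z + iJ invertible}` (the tube domain minus the singular
set) onto the strict `J`-contractions `{γ : J − γ*Jγ ≫ 0}`; for every strict
`J`-contraction `γ`, `I − γ` is invertible and the inverse map is
`γ ↦ i (I − γ)⁻¹ (I + γ) J`. -/
theorem cayley_transform_semigroup (p q : ℕ) (hp : 1 ≤ p) (hq : 1 ≤ q)
    (J : Matrix (Fin p ⊕ Fin q) (Fin p ⊕ Fin q) ℂ)
    (hJ : J = Matrix.fromBlocks (-1) 0 0 1) :
    Set.BijOn (fun Z => (Z - Complex.I • J) * (Z + Complex.I • J)⁻¹)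
      {Z : Matrix (Fin p ⊕ Fin q) (Fin p ⊕ Fin q) ℂ |
        ((2 * Complex.I)⁻¹ • (Z - Zᴴ)).PosDef ∧ IsUnit (Z + Complex.I • J)}
      {γ : Matrix (Fin p ⊕ Fin q) (Fin p ⊕ Fin q) ℂ | (J - γᴴ * J * γ).PosDef} ∧
    (∀ γ : Matrix (Fin p ⊕ Fin q) (Fin p ⊕ Fin q) ℂ,
      (J - γᴴ * J * γ).PosDef → IsUnit (1 - γ)) ∧
    Set.InvOn (fun γ => Complex.I • ((1 - γ)⁻¹ * (1 + γ) * J))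
      (fun Z => (Z - Complex.I • J) * (Z + Complex.I • J)⁻¹)
      {Z : Matrix (Fin p ⊕ Fin q) (Fin p ⊕ Fin q) ℂ |
        ((2 * Complex.I)⁻¹ • (Z - Zᴴ)).PosDef ∧ IsUnit (Z + Complex.I • J)}
      {γ : Matrix (Fin p ⊕ Fin q) (Fin p ⊕ Fin q) ℂ | (J - γᴴ * J * γ).PosDef} :=
  cayley_transform_semigroup_general p q J hJ
end

section
/- The map Z ↦ (Z − iI)(Z + iI)⁻¹ is a bijection from the Siegel upper half-space {Z ∈ M_n(ℂ) : (Z − Z*)/(2i) is positive definite} onto {w ∈ M_n(ℂ) : I − w*w is positive definite}; in particular Z + iI is invertible for every Z in the half-space, and I − w is invertible for every w in the image, with inverse map w ↦ i(I − w)⁻¹(I + w). -/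
open Matrix ComplexOrder

private lemma cayley_posDef_conj {n : ℕ} {M B : Matrix (Fin n) (Fin n) ℂ}
    (hM : M.PosDef) (hB : IsUnit B) : (Bᴴ * M * B).PosDef := by
  refine Matrix.PosDef.of_dotProduct_mulVec_pos (Matrix.isHermitian_conjTranspose_mul_mul B hM.1) fun x hx => ?_
  have hBx : B *ᵥ x ≠ 0 := fun h =>
    hx (Matrix.mulVec_injective_iff_isUnit.mpr hB (by simp [h]))
  simpa only [star_mulVec, dotProduct_mulVec, vecMul_vecMul] using hM.dotProduct_mulVec_pos hBx

private lemma cayley_posDef_four_smul {n : ℕ} {M : Matrix (Fin n) (Fin n) ℂ} (hM : M.PosDef) :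
    ((4 : ℂ) • M).PosDef := by
  refine Matrix.PosDef.of_dotProduct_mulVec_pos ?_ fun x hx => ?_
  · unfold Matrix.IsHermitian
    simp [Matrix.conjTranspose_smul, hM.1.eq]
  · rw [Matrix.smul_mulVec, dotProduct_smul, smul_eq_mul]
    exact mul_pos (by norm_num) (hM.dotProduct_mulVec_pos hx)

private lemma cayley_unit_add {n : ℕ} {Z : Matrix (Fin n) (Fin n) ℂ}
    (hZ : ((2 * Complex.I)⁻¹ • (Z - Zᴴ)).PosDef) :
    IsUnit (Z + Complex.I • (1 : Matrix (Fin n) (Fin n) ℂ)) := by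
  rw [Matrix.isUnit_iff_isUnit_det, isUnit_iff_ne_zero]
  intro hdet
  obtain ⟨v, hv, hv0⟩ := Matrix.exists_mulVec_eq_zero_iff.mpr hdet
  have hZv : Z *ᵥ v = -(Complex.I • v) := by
    rw [Matrix.add_mulVec, Matrix.smul_mulVec, Matrix.one_mulVec] at hv0
    linear_combination (norm := module) hv0
  set t := star v ⬝ᵥ v with ht_def
  have ht : 0 < t := dotProduct_star_self_pos_iff.mpr hv
  have h1 : star v ⬝ᵥ Z *ᵥ v = -(Complex.I * t) := by
    rw [hZv, dotProduct_neg, dotProduct_smul, smul_eq_mul]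
  have h2 : star v ⬝ᵥ Zᴴ *ᵥ v = Complex.I * t := by
    rw [Matrix.dotProduct_mulVec, ← Matrix.star_mulVec, hZv]
    rw [star_neg, star_smul, neg_dotProduct, smul_dotProduct]
    simp [smul_eq_mul]
    exact ht_def.symm
  have hq : star v ⬝ᵥ (((2 * Complex.I)⁻¹ • (Z - Zᴴ)) *ᵥ v) = -t := by
    rw [Matrix.smul_mulVec, dotProduct_smul, Matrix.sub_mulVec, dotProduct_sub, h1, h2,
      smul_eq_mul]
    have h2I : (2 * Complex.I) ≠ 0 := by simp [Complex.I_ne_zero]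
    field_simp
    ring
  have hpos := hZ.dotProduct_mulVec_pos hv
  rw [hq, neg_pos] at hpos
  exact absurd ht (asymm hpos)

private lemma cayley_unit_one_sub {n : ℕ} {w : Matrix (Fin n) (Fin n) ℂ}
    (hw : (1 - wᴴ * w).PosDef) : IsUnit (1 - w) := by
  rw [Matrix.isUnit_iff_isUnit_det, isUnit_iff_ne_zero]
  intro hdet
  obtain ⟨v, hv, hv0⟩ := Matrix.exists_mulVec_eq_zero_iff.mpr hdet
  have hwv : w *ᵥ v = v := by
    rw [Matrix.sub_mulVec, Matrix.one_mulVec] at hv0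
    linear_combination (norm := module) -hv0
  have hq : star v ⬝ᵥ ((1 - wᴴ * w) *ᵥ v) = 0 := by
    rw [Matrix.sub_mulVec, dotProduct_sub, Matrix.one_mulVec, ← Matrix.mulVec_mulVec,
      Matrix.dotProduct_mulVec, ← Matrix.star_mulVec, hwv, sub_self]
  have := hw.dotProduct_mulVec_pos hv
  rw [hq] at this
  exact lt_irrefl _ this

private lemma cayley_posDef_flip {n : ℕ} {w : Matrix (Fin n) (Fin n) ℂ}
    (hw : (1 - wᴴ * w).PosDef) : (1 - w * wᴴ).PosDef := by
  set N := (1 - wᴴ * w)⁻¹ with hN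
  have hNpd : N.PosDef := hw.inv
  have hP : (1 + w * N * wᴴ).PosDef :=
    Matrix.PosDef.add_posSemidef Matrix.PosDef.one (hNpd.posSemidef.mul_mul_conjTranspose_same w)
  have hNinv : N * (1 - wᴴ * w) = 1 := Matrix.nonsing_inv_mul _ hw.det_pos.ne'.isUnit
  have key : (1 + w * N * wᴴ) * (1 - w * wᴴ) = 1 := by
    have expand : (1 + w * N * wᴴ) * (1 - w * wᴴ)
        = 1 - w * wᴴ + w * (N * (1 - wᴴ * w)) * wᴴ := by noncomm_ring
    rw [expand, hNinv]
    noncomm_ring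
  rw [← Matrix.inv_eq_right_inv key]
  exact hP.inv

private lemma cayley_key_sub {n : ℕ} {Z : Matrix (Fin n) (Fin n) ℂ} :
    (Z + Complex.I • 1)ᴴ * (Z + Complex.I • 1) - (Z - Complex.I • 1)ᴴ * (Z - Complex.I • 1)
      = (2 * Complex.I) • (Zᴴ - Z) := by
  simp only [Matrix.conjTranspose_add, Matrix.conjTranspose_sub, Matrix.conjTranspose_smul,
    Matrix.conjTranspose_one, Complex.star_def, Complex.conj_I, Matrix.add_mul, Matrix.mul_add,
    Matrix.sub_mul, Matrix.mul_sub, Matrix.neg_mul, Matrix.mul_neg, smul_mul_assoc,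
    mul_smul_comm, smul_smul, mul_one, Matrix.one_mul, Matrix.mul_one, smul_add, smul_sub,
    smul_neg]
  module

private lemma cayley_forward_mem {n : ℕ} {Z : Matrix (Fin n) (Fin n) ℂ}
    (hZ : ((2 * Complex.I)⁻¹ • (Z - Zᴴ)).PosDef) :
    (1 - ((Z - Complex.I • 1) * (Z + Complex.I • 1)⁻¹)ᴴ *
        ((Z - Complex.I • 1) * (Z + Complex.I • 1)⁻¹)).PosDef := by
  set A := Z - Complex.I • (1 : Matrix (Fin n) (Fin n) ℂ) with hA
  set B := Z + Complex.I • (1 : Matrix (Fin n) (Fin n) ℂ) with hB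
  have hBu : IsUnit B := cayley_unit_add hZ
  have hBd : IsUnit B.det := (Matrix.isUnit_iff_isUnit_det B).mp hBu
  have hBHd : IsUnit Bᴴ.det := by rw [Matrix.det_conjTranspose]; exact hBd.star
  have h1 : B * B⁻¹ = 1 := Matrix.mul_nonsing_inv B hBd
  have h2 : Bᴴ⁻¹ * Bᴴ = 1 := Matrix.nonsing_inv_mul Bᴴ hBHd
  have hct : (B⁻¹)ᴴ = Bᴴ⁻¹ := Matrix.conjTranspose_nonsing_inv B
  have eq1 : 1 - (A * B⁻¹)ᴴ * (A * B⁻¹) = (B⁻¹)ᴴ * (Bᴴ * B - Aᴴ * A) * B⁻¹ := by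
    rw [hct]
    simp only [Matrix.conjTranspose_mul, hct, Matrix.mul_sub, Matrix.sub_mul,
      Matrix.mul_assoc, h1, Matrix.mul_one, h2, Matrix.one_mul]
  have hscal : (2 * Complex.I) • (Zᴴ - Z)
      = (4 : ℂ) • ((2 * Complex.I)⁻¹ • (Z - Zᴴ)) := by
    rw [smul_smul, ← neg_sub Z Zᴴ, smul_neg, ← neg_smul]
    congr 1
    have h2I : (2 * Complex.I) ≠ 0 := by simp [Complex.I_ne_zero]
    field_simp
    linear_combination (-4 : ℂ) * Complex.I_sq
  have key : Bᴴ * B - Aᴴ * A = (4 : ℂ) • ((2 * Complex.I)⁻¹ • (Z - Zᴴ)) := by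
    rw [hA, hB, cayley_key_sub, hscal]
  rw [eq1, key]
  exact cayley_posDef_conj (cayley_posDef_four_smul hZ)
    (Matrix.isUnit_nonsing_inv_iff.mpr hBu)

private lemma cayley_backward_mem {n : ℕ} {w : Matrix (Fin n) (Fin n) ℂ}
    (hw : (1 - wᴴ * w).PosDef) :
    ((2 * Complex.I)⁻¹ • ((Complex.I • ((1 - w)⁻¹ * (1 + w)))
      - (Complex.I • ((1 - w)⁻¹ * (1 + w)))ᴴ)).PosDef := by
  set D := (1 : Matrix (Fin n) (Fin n) ℂ) - w with hDdef
  set C := D⁻¹ with hCdef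
  have hDu : IsUnit D := cayley_unit_one_sub hw
  have hDd : IsUnit D.det := (Matrix.isUnit_iff_isUnit_det D).mp hDu
  have h1 : D * C = 1 := Matrix.mul_nonsing_inv D hDd
  have h2 : C * D = 1 := Matrix.nonsing_inv_mul D hDd
  have hDH : Dᴴ * Cᴴ = 1 := by rw [← Matrix.conjTranspose_mul, h2, Matrix.conjTranspose_one]
  have hCH : Cᴴ * Dᴴ = 1 := by rw [← Matrix.conjTranspose_mul, h1, Matrix.conjTranspose_one]
  have cancel : ∀ X Y : Matrix (Fin n) (Fin n) ℂ,
      D * X * Dᴴ = D * Y * Dᴴ → X = Y := by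
    intro X Y h
    have e : ∀ X : Matrix (Fin n) (Fin n) ℂ, C * (D * X * Dᴴ) * Cᴴ = X := by
      intro X
      calc C * (D * X * Dᴴ) * Cᴴ = (C * D) * X * (Dᴴ * Cᴴ) := by
            simp only [Matrix.mul_assoc]
        _ = X := by rw [h2, hDH, Matrix.one_mul, Matrix.mul_one]
    rw [← e X, ← e Y, h]
  have hDHval : Dᴴ = 1 - wᴴ := by
    rw [hDdef, Matrix.conjTranspose_sub, Matrix.conjTranspose_one]
  have claim : C * (1 + w) + (1 + wᴴ) * Cᴴ = (2 : ℂ) • (C * (1 - w * wᴴ) * Cᴴ) := by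
    apply cancel
    have lhs : D * (C * (1 + w) + (1 + wᴴ) * Cᴴ) * Dᴴ
        = (1 + w) * Dᴴ + D * (1 + wᴴ) := by
      rw [Matrix.mul_add, Matrix.add_mul]
      congr 1
      · calc D * (C * (1 + w)) * Dᴴ = (D * C) * ((1 + w) * Dᴴ) := by
              simp only [Matrix.mul_assoc]
          _ = (1 + w) * Dᴴ := by rw [h1, Matrix.one_mul]
      · calc D * ((1 + wᴴ) * Cᴴ) * Dᴴ = D * (1 + wᴴ) * (Cᴴ * Dᴴ) := by
              simp only [Matrix.mul_assoc]
          _ = D * (1 + wᴴ) := by rw [hCH, Matrix.mul_one]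
    have rhs : D * ((2 : ℂ) • (C * (1 - w * wᴴ) * Cᴴ)) * Dᴴ
        = (2 : ℂ) • (1 - w * wᴴ) := by
      rw [Matrix.mul_smul, Matrix.smul_mul]
      congr 1
      calc D * (C * (1 - w * wᴴ) * Cᴴ) * Dᴴ
          = (D * C) * ((1 - w * wᴴ) * (Cᴴ * Dᴴ)) := by simp only [Matrix.mul_assoc]
        _ = 1 - w * wᴴ := by rw [h1, hCH, Matrix.one_mul, Matrix.mul_one]
    rw [lhs, rhs, hDHval, hDdef]
    rw [two_smul]
    noncomm_ring
  have hZH : (Complex.I • (C * (1 + w)))ᴴ = -(Complex.I • ((1 + wᴴ) * Cᴴ)) := by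
    rw [Matrix.conjTranspose_smul, Matrix.conjTranspose_mul, Matrix.conjTranspose_add,
      Matrix.conjTranspose_one, Complex.star_def, Complex.conj_I, neg_smul]
  rw [hZH, sub_neg_eq_add, ← smul_add, smul_smul]
  have hsc : (2 * Complex.I)⁻¹ * Complex.I = (2 : ℂ)⁻¹ := by
    field_simp
  rw [hsc, claim, smul_smul]
  norm_num
  have hCu : IsUnit C := Matrix.isUnit_nonsing_inv_iff.mpr hDu
  have hfin := cayley_posDef_conj (cayley_posDef_flip hw)
    ((Matrix.isUnit_conjTranspose C).mpr hCu)
  rw [Matrix.conjTranspose_conjTranspose] at hfin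
  exact hfin

private lemma cayley_left {n : ℕ} {Z : Matrix (Fin n) (Fin n) ℂ}
    (hZ : ((2 * Complex.I)⁻¹ • (Z - Zᴴ)).PosDef) :
    Complex.I • ((1 - (Z - Complex.I • 1) * (Z + Complex.I • 1)⁻¹)⁻¹ *
      (1 + (Z - Complex.I • 1) * (Z + Complex.I • 1)⁻¹)) = Z := by
  set A := Z - Complex.I • (1 : Matrix (Fin n) (Fin n) ℂ) with hA
  set B := Z + Complex.I • (1 : Matrix (Fin n) (Fin n) ℂ) with hB
  have h2I : (2 * Complex.I) ≠ 0 := by simp [Complex.I_ne_zero]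
  have hBu : IsUnit B := cayley_unit_add hZ
  have hBd : IsUnit B.det := (Matrix.isUnit_iff_isUnit_det B).mp hBu
  have h1 : B * B⁻¹ = 1 := Matrix.mul_nonsing_inv B hBd
  have h1' : B⁻¹ * B = 1 := Matrix.nonsing_inv_mul B hBd
  have hw1 : 1 - A * B⁻¹ = (2 * Complex.I) • B⁻¹ := by
    have hBA : B - A = (2 * Complex.I) • (1 : Matrix (Fin n) (Fin n) ℂ) := by
      rw [hA, hB]; module
    calc 1 - A * B⁻¹ = (B - A) * B⁻¹ := by conv_rhs => rw [Matrix.sub_mul, h1]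
      _ = (2 * Complex.I) • B⁻¹ := by rw [hBA, smul_mul_assoc, Matrix.one_mul]
  have hw2 : 1 + A * B⁻¹ = ((2 : ℂ) • Z) * B⁻¹ := by
    have hBA2 : B + A = (2 : ℂ) • Z := by rw [hA, hB]; module
    calc 1 + A * B⁻¹ = (B + A) * B⁻¹ := by conv_rhs => rw [Matrix.add_mul, h1]
      _ = ((2 : ℂ) • Z) * B⁻¹ := by rw [hBA2]
  have hinv1 : (1 - A * B⁻¹)⁻¹ = (2 * Complex.I)⁻¹ • B := by
    apply Matrix.inv_eq_right_inv
    rw [hw1, smul_mul_assoc, mul_smul_comm, smul_smul, h1', mul_inv_cancel₀ h2I, one_smul]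
  rw [hinv1, hw2]
  rw [smul_mul_assoc, smul_mul_assoc, mul_smul_comm, smul_smul, smul_smul]
  have hsc : Complex.I * (2 * Complex.I)⁻¹ * 2 = 1 := by field_simp
  rw [hsc, one_smul]
  have hcomm : B * Z = Z * B := by
    rw [hB]
    simp only [Matrix.add_mul, Matrix.mul_add, smul_mul_assoc, mul_smul_comm,
      Matrix.one_mul, Matrix.mul_one]
  rw [← Matrix.mul_assoc, hcomm, Matrix.mul_assoc, h1, Matrix.mul_one]

private lemma cayley_right {n : ℕ} {w : Matrix (Fin n) (Fin n) ℂ}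
    (hw : (1 - wᴴ * w).PosDef) :
    (Complex.I • ((1 - w)⁻¹ * (1 + w)) - Complex.I • 1) *
      (Complex.I • ((1 - w)⁻¹ * (1 + w)) + Complex.I • 1)⁻¹ = w := by
  set D := (1 : Matrix (Fin n) (Fin n) ℂ) - w with hDdef
  set C := D⁻¹ with hCdef
  have h2I : (2 * Complex.I) ≠ 0 := by simp [Complex.I_ne_zero]
  have hDu : IsUnit D := cayley_unit_one_sub hw
  have hDd : IsUnit D.det := (Matrix.isUnit_iff_isUnit_det D).mp hDu
  have h1 : D * C = 1 := Matrix.mul_nonsing_inv D hDd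
  have h2 : C * D = 1 := Matrix.nonsing_inv_mul D hDd
  have hZm : Complex.I • (C * (1 + w)) - Complex.I • (1 : Matrix (Fin n) (Fin n) ℂ)
      = (2 * Complex.I) • (C * w) := by
    have e1 : Complex.I • (C * (1 + w)) - Complex.I • (C * D) = (2 * Complex.I) • (C * w) := by
      rw [hDdef]
      simp only [Matrix.mul_add, Matrix.mul_sub, Matrix.mul_one]
      module
    calc Complex.I • (C * (1 + w)) - Complex.I • (1 : Matrix (Fin n) (Fin n) ℂ)
        = Complex.I • (C * (1 + w)) - Complex.I • (C * D) := by rw [h2]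
      _ = (2 * Complex.I) • (C * w) := e1
  have hZp : Complex.I • (C * (1 + w)) + Complex.I • (1 : Matrix (Fin n) (Fin n) ℂ)
      = (2 * Complex.I) • C := by
    have e1 : Complex.I • (C * (1 + w)) + Complex.I • (C * D) = (2 * Complex.I) • C := by
      rw [hDdef]
      simp only [Matrix.mul_add, Matrix.mul_sub, Matrix.mul_one]
      module
    calc Complex.I • (C * (1 + w)) + Complex.I • (1 : Matrix (Fin n) (Fin n) ℂ)
        = Complex.I • (C * (1 + w)) + Complex.I • (C * D) := by rw [h2]
      _ = (2 * Complex.I) • C := e1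
  have hinv2 : (Complex.I • (C * (1 + w)) + Complex.I • (1 : Matrix (Fin n) (Fin n) ℂ))⁻¹
      = (2 * Complex.I)⁻¹ • D := by
    apply Matrix.inv_eq_right_inv
    rw [hZp, smul_mul_assoc, mul_smul_comm, smul_smul, h2, mul_inv_cancel₀ h2I, one_smul]
  rw [hinv2, hZm, smul_mul_assoc, mul_smul_comm, smul_smul, mul_inv_cancel₀ h2I, one_smul]
  have hwD : w * D = D * w := by rw [hDdef]; noncomm_ring
  rw [Matrix.mul_assoc, hwD, ← Matrix.mul_assoc, h2, Matrix.one_mul]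

/-- The Cayley transform `Z ↦ (Z − iI)(Z + iI)⁻¹` is a bijection from the Siegel upper
half-space `{Z : (Z − Z*)/(2i) ≫ 0}` onto the bounded domain `{w : I − w*w ≫ 0}`;
`Z + iI` is invertible on the half-space, `I − w` is invertible on the image, and the
inverse map is `w ↦ i (I − w)⁻¹ (I + w)`. -/
theorem cayley_transform_tube_domain (n : ℕ) (hn : 0 < n) :
    Set.BijOn (fun Z => (Z - Complex.I • (1 : Matrix (Fin n) (Fin n) ℂ)) *
        (Z + Complex.I • (1 : Matrix (Fin n) (Fin n) ℂ))⁻¹)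
      {Z : Matrix (Fin n) (Fin n) ℂ | ((2 * Complex.I)⁻¹ • (Z - Zᴴ)).PosDef}
      {w : Matrix (Fin n) (Fin n) ℂ | (1 - wᴴ * w).PosDef} ∧
    (∀ Z : Matrix (Fin n) (Fin n) ℂ, ((2 * Complex.I)⁻¹ • (Z - Zᴴ)).PosDef →
      IsUnit (Z + Complex.I • (1 : Matrix (Fin n) (Fin n) ℂ))) ∧
    (∀ w : Matrix (Fin n) (Fin n) ℂ, (1 - wᴴ * w).PosDef → IsUnit (1 - w)) ∧
    Set.InvOn (fun w => Complex.I • ((1 - w)⁻¹ * (1 + w)))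
      (fun Z => (Z - Complex.I • (1 : Matrix (Fin n) (Fin n) ℂ)) *
        (Z + Complex.I • (1 : Matrix (Fin n) (Fin n) ℂ))⁻¹)
      {Z : Matrix (Fin n) (Fin n) ℂ | ((2 * Complex.I)⁻¹ • (Z - Zᴴ)).PosDef}
      {w : Matrix (Fin n) (Fin n) ℂ | (1 - wᴴ * w).PosDef} := by
  have hinv : Set.InvOn (fun w => Complex.I • ((1 - w)⁻¹ * (1 + w)))
      (fun Z => (Z - Complex.I • (1 : Matrix (Fin n) (Fin n) ℂ)) *
        (Z + Complex.I • (1 : Matrix (Fin n) (Fin n) ℂ))⁻¹)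
      {Z : Matrix (Fin n) (Fin n) ℂ | ((2 * Complex.I)⁻¹ • (Z - Zᴴ)).PosDef}
      {w : Matrix (Fin n) (Fin n) ℂ | (1 - wᴴ * w).PosDef} :=
    ⟨fun Z hZ => cayley_left hZ, fun w hw => cayley_right hw⟩
  refine ⟨Set.InvOn.bijOn hinv (fun Z hZ => cayley_forward_mem hZ)
      (fun w hw => cayley_backward_mem hw),
    fun Z hZ => cayley_unit_add hZ, fun w hw => cayley_unit_one_sub hw, hinv⟩
end

section
/- Let G be a uniformly perfect group, i.e. there exists an integer k such that every element of G is a product of at most k commutators. Let Γ be a group, T a central element of Γ of infinite order, and π : Γ → G a surjective group homomorphism whose kernel is exactly the cyclic subgroup generated by T. Suppose Φ₁, Φ₂ : Γ → ℝ both satisfy: (1) Φ(γT) = Φ(γ) + 1 for all γ ∈ Γ; (2) the map (γ₁, γ₂) ↦ Φ(γ₁γ₂) − Φ(γ₁) − Φ(γ₂) is bounded on Γ × Γ; (3) Φ(γⁿ) = nΦ(γ) for all γ ∈ Γ and n ∈ ℤ. Then Φ₁ = Φ₂. -/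
/-!
A homogeneous quasi-morphism is constant on conjugacy classes, so its value on a commutator is
bounded by its defect, and on a product of `k` commutators by `2k` times the defect. The
difference `D = Φ₁ - Φ₂` is again a homogeneous quasi-morphism, and it is invariant under
right multiplication by `T`. Every `δ : Γ` is a lift of at most `k` commutators times a power of
`T`, hence `D` is bounded; a bounded homogeneous function vanishes, since `n |D γ| = |D (γ ^ n)|`.
-/

open scoped commutatorElement

namespace Quasimorphism

variable {Γ : Type*} [Group Γ]

def IsHomogeneous (Φ : Γ → ℝ) : Prop :=
  ∀ (γ : Γ) (m : ℤ), Φ (γ ^ m) = m * Φ γ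

def DefectLE (Φ : Γ → ℝ) (C : ℝ) : Prop :=
  ∀ γ₁ γ₂ : Γ, |Φ (γ₁ * γ₂) - Φ γ₁ - Φ γ₂| ≤ C

section Defect

variable {Φ Ψ : Γ → ℝ} {C D : ℝ}

theorem DefectLE.nonneg (hΦ : DefectLE Φ C) : 0 ≤ C := by
  have h := hΦ 1 1
  rw [one_mul, sub_sub, ← two_mul, show Φ 1 - 2 * Φ 1 = -Φ 1 by ring, abs_neg] at h
  exact (abs_nonneg _).trans h

theorem DefectLE.sub (hΦ : DefectLE Φ C) (hΨ : DefectLE Ψ D) :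
    DefectLE (Φ - Ψ) (C + D) := by
  intro γ₁ γ₂
  calc |(Φ - Ψ) (γ₁ * γ₂) - (Φ - Ψ) γ₁ - (Φ - Ψ) γ₂|
      = |(Φ (γ₁ * γ₂) - Φ γ₁ - Φ γ₂) - (Ψ (γ₁ * γ₂) - Ψ γ₁ - Ψ γ₂)| := by
        simp only [Pi.sub_apply]; ring_nf
    _ ≤ C + D := (abs_sub _ _).trans (add_le_add (hΦ γ₁ γ₂) (hΨ γ₁ γ₂))

theorem DefectLE.abs_map_list_prod_le (hΦ : DefectLE Φ C) (h₁ : Φ 1 = 0) {B : ℝ}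
    (l : List Γ) (hl : ∀ x ∈ l, |Φ x| ≤ B) : |Φ l.prod| ≤ l.length * (B + C) := by
  induction l with
  | nil => simp [h₁]
  | cons x l ih =>
    have hx := hl x List.mem_cons_self
    have hrest := ih fun y hy => hl y (List.mem_cons_of_mem x hy)
    rw [List.prod_cons, List.length_cons]
    calc |Φ (x * l.prod)|
        = |(Φ (x * l.prod) - Φ x - Φ l.prod) + Φ x + Φ l.prod| := by ring_nf
      _ ≤ |Φ (x * l.prod) - Φ x - Φ l.prod| + |Φ x| + |Φ l.prod| := abs_add_three _ _ _
      _ ≤ C + B + l.length * (B + C) := add_le_add (add_le_add (hΦ _ _) hx) hrest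
      _ = ((l.length + 1 : ℕ) : ℝ) * (B + C) := by push_cast; ring

end Defect

namespace IsHomogeneous

variable {Φ Ψ : Γ → ℝ}

theorem map_one (hΦ : IsHomogeneous Φ) : Φ 1 = 0 := by
  simpa using hΦ 1 0

theorem map_inv (hΦ : IsHomogeneous Φ) (γ : Γ) : Φ γ⁻¹ = -Φ γ := by
  simpa using hΦ γ (-1)

theorem sub (hΦ : IsHomogeneous Φ) (hΨ : IsHomogeneous Ψ) : IsHomogeneous (Φ - Ψ) := by
  intro γ m
  simp only [Pi.sub_apply, hΦ γ m, hΨ γ m, mul_sub]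

theorem comp_conj (hΦ : IsHomogeneous Φ) (g : Γ) :
    IsHomogeneous fun x => Φ (g * x * g⁻¹) := by
  intro x m
  rw [← hΦ, conj_zpow]

theorem eq_zero_of_forall_abs_le (hΦ : IsHomogeneous Φ) {M : ℝ} (hM : ∀ γ, |Φ γ| ≤ M) :
    Φ = 0 := by
  funext γ
  by_contra hγ
  have hpos : 0 < |Φ γ| := abs_pos.2 hγ
  obtain ⟨n, hn⟩ := exists_nat_gt (M / |Φ γ|)
  have hpow : |Φ (γ ^ (n : ℤ))| = n * |Φ γ| := by
    rw [hΦ, abs_mul, Int.cast_natCast, Nat.abs_cast]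
  linarith [hM (γ ^ (n : ℤ)), (div_lt_iff₀ hpos).1 hn]

variable {C : ℝ}

theorem map_conj (hΦ : IsHomogeneous Φ) (hC : DefectLE Φ C) (g x : Γ) :
    Φ (g * x * g⁻¹) = Φ x := by
  have hbound : ∀ y, |Φ (g * y * g⁻¹) - Φ y| ≤ 2 * C := fun y => by
    calc |Φ (g * y * g⁻¹) - Φ y|
        = |(Φ (g * (y * g⁻¹)) - Φ g - Φ (y * g⁻¹)) + (Φ (y * g⁻¹) - Φ y - Φ g⁻¹)| := by
          rw [hΦ.map_inv, mul_assoc]; ring_nf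
      _ ≤ 2 * C := (abs_add_le _ _).trans (by linarith [hC g (y * g⁻¹), hC y g⁻¹])
  exact sub_eq_zero.1 (congrFun ((hΦ.comp_conj g).sub hΦ |>.eq_zero_of_forall_abs_le hbound) x)

theorem abs_map_commutatorElement_le (hΦ : IsHomogeneous Φ) (hC : DefectLE Φ C)
    (a b : Γ) : |Φ ⁅a, b⁆| ≤ C := by
  have h := hC (a * b * a⁻¹) b⁻¹
  rwa [hΦ.map_conj hC, hΦ.map_inv, sub_neg_eq_add, sub_add_cancel] at h

theorem abs_map_prod_commutatorElement_le (hΦ : IsHomogeneous Φ) (hC : DefectLE Φ C)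
    (l : List (Γ × Γ)) : |Φ (l.map fun p => ⁅p.1, p.2⁆).prod| ≤ l.length * (2 * C) := by
  have := hC.abs_map_list_prod_le hΦ.map_one (B := C) (l.map fun p => ⁅p.1, p.2⁆) <| by
    simp only [List.mem_map]
    rintro _ ⟨p, -, rfl⟩
    exact hΦ.abs_map_commutatorElement_le hC p.1 p.2
  rwa [List.length_map, ← two_mul] at this

end IsHomogeneous

end Quasimorphism

open Quasimorphism

def CommutatorWidthLE (G : Type*) [Group G] (k : ℕ) : Prop :=
  ∀ g : G, ∃ l : List (G × G), l.length ≤ k ∧ g = (l.map fun p => ⁅p.1, p.2⁆).prod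

theorem exists_eq_prod_commutatorElement_mul_zpow {G Γ : Type*} [Group G] [Group Γ] {k : ℕ}
    (hk : CommutatorWidthLE G k) {T : Γ} {π : Γ →* G} (hπ : Function.Surjective π)
    (hker : π.ker = Subgroup.zpowers T) (δ : Γ) :
    ∃ (l : List (Γ × Γ)) (n : ℤ), l.length ≤ k ∧ δ = (l.map fun p => ⁅p.1, p.2⁆).prod * T ^ n := by
  obtain ⟨l, hl, hδ⟩ := hk (π δ)
  let s := Function.surjInv hπ
  let L := l.map fun p => (s p.1, s p.2)
  let c := (L.map fun p => ⁅p.1, p.2⁆).prod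
  have hπc : π c = π δ := by
    simp only [c, L, map_list_prod, List.map_map, hδ]
    refine congrArg List.prod (List.map_congr_left fun p _ => ?_)
    simp [s, map_commutatorElement, Function.surjInv_eq hπ]
  obtain ⟨n, hn : T ^ n = c⁻¹ * δ⟩ : c⁻¹ * δ ∈ Subgroup.zpowers T := by
    rw [← hker, MonoidHom.mem_ker, map_mul, map_inv, hπc, inv_mul_cancel]
  exact ⟨L, n, by rwa [List.length_map], by rw [hn, mul_inv_cancel_left]⟩

theorem map_mul_zpow_of_forall_map_mul_eq {Γ α : Type*} [Group Γ] {f : Γ → α} {T : Γ}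
    (hf : ∀ γ, f (γ * T) = f γ) (γ : Γ) (n : ℤ) : f (γ * T ^ n) = f γ := by
  induction n using Int.induction_on with
  | zero => simp
  | succ m ih => rw [zpow_add_one, ← mul_assoc, hf, ih]
  | pred m ih =>
    rw [← ih, ← hf (γ * T ^ (-(m : ℤ) - 1)), mul_assoc, ← zpow_add_one, sub_add_cancel]

theorem Quasimorphism.IsHomogeneous.eq_zero_of_forall_map_mul_eq {G Γ : Type*} [Group G]
    [Group Γ] {k : ℕ} (hk : CommutatorWidthLE G k) {T : Γ} {π : Γ →* G}
    (hπ : Function.Surjective π) (hker : π.ker = Subgroup.zpowers T) {D : Γ → ℝ} {C : ℝ}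
    (hD : IsHomogeneous D) (hC : DefectLE D C)
    (hT : ∀ γ, D (γ * T) = D γ) : D = 0 := by
  refine hD.eq_zero_of_forall_abs_le (M := k * (2 * C)) fun δ => ?_
  obtain ⟨l, n, hl, rfl⟩ := exists_eq_prod_commutatorElement_mul_zpow hk hπ hker δ
  rw [map_mul_zpow_of_forall_map_mul_eq hT]
  refine (hD.abs_map_prod_commutatorElement_le hC l).trans ?_
  have := hC.nonneg
  gcongr

theorem homogeneous_quasimorphism_unique_general {G Γ : Type*} [Group G] [Group Γ]
    (hG : ∃ k : ℕ, ∀ g : G, ∃ l : List (G × G), l.length ≤ k ∧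
      g = (l.map fun p => p.1 * p.2 * p.1⁻¹ * p.2⁻¹).prod)
    (T : Γ)
    (π : Γ →* G) (hπ : Function.Surjective π) (hker : π.ker = Subgroup.zpowers T)
    (Φ₁ Φ₂ : Γ → ℝ)
    (h1₁ : ∀ γ : Γ, Φ₁ (γ * T) = Φ₁ γ + 1)
    (h2₁ : ∃ C : ℝ, ∀ γ₁ γ₂ : Γ, |Φ₁ (γ₁ * γ₂) - Φ₁ γ₁ - Φ₁ γ₂| ≤ C)
    (h3₁ : ∀ (γ : Γ) (m : ℤ), Φ₁ (γ ^ m) = m * Φ₁ γ)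
    (h1₂ : ∀ γ : Γ, Φ₂ (γ * T) = Φ₂ γ + 1)
    (h2₂ : ∃ C : ℝ, ∀ γ₁ γ₂ : Γ, |Φ₂ (γ₁ * γ₂) - Φ₂ γ₁ - Φ₂ γ₂| ≤ C)
    (h3₂ : ∀ (γ : Γ) (m : ℤ), Φ₂ (γ ^ m) = m * Φ₂ γ) :
    Φ₁ = Φ₂ := by
  obtain ⟨k, hk⟩ := hG
  obtain ⟨C₁, hC₁⟩ := h2₁
  obtain ⟨C₂, hC₂⟩ := h2₂
  have hT : ∀ γ, (Φ₁ - Φ₂) (γ * T) = (Φ₁ - Φ₂) γ := fun γ => by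
    simp only [Pi.sub_apply, h1₁, h1₂, add_sub_add_right_eq_sub]
  exact sub_eq_zero.1 <| IsHomogeneous.eq_zero_of_forall_map_mul_eq hk hπ hker
    (IsHomogeneous.sub h3₁ h3₂) (DefectLE.sub hC₁ hC₂) hT

/-- Uniqueness of the homogeneous quasi-morphism normalized on a central extension of a
uniformly perfect group: if `G` is uniformly perfect, `0 → ℤ → Γ → G → 1` is a central
extension with `T` the (infinite order, central) image of `1 ∈ ℤ`, and `Φ₁, Φ₂ : Γ → ℝ`
both satisfy `Φ(γT) = Φ(γ) + 1`, boundedness of `Φ(γ₁γ₂) − Φ(γ₁) − Φ(γ₂)`, and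
`Φ(γⁿ) = nΦ(γ)`, then `Φ₁ = Φ₂`. -/
theorem homogeneous_quasimorphism_unique {G Γ : Type*} [Group G] [Group Γ]
    (hG : ∃ k : ℕ, ∀ g : G, ∃ l : List (G × G), l.length ≤ k ∧
      g = (l.map fun p => p.1 * p.2 * p.1⁻¹ * p.2⁻¹).prod)
    (T : Γ) (hTc : ∀ γ : Γ, T * γ = γ * T) (hTo : ¬ IsOfFinOrder T)
    (π : Γ →* G) (hπ : Function.Surjective π) (hker : π.ker = Subgroup.zpowers T)
    (Φ₁ Φ₂ : Γ → ℝ)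
    (h1₁ : ∀ γ : Γ, Φ₁ (γ * T) = Φ₁ γ + 1)
    (h2₁ : ∃ C : ℝ, ∀ γ₁ γ₂ : Γ, |Φ₁ (γ₁ * γ₂) - Φ₁ γ₁ - Φ₁ γ₂| ≤ C)
    (h3₁ : ∀ (γ : Γ) (m : ℤ), Φ₁ (γ ^ m) = m * Φ₁ γ)
    (h1₂ : ∀ γ : Γ, Φ₂ (γ * T) = Φ₂ γ + 1)
    (h2₂ : ∃ C : ℝ, ∀ γ₁ γ₂ : Γ, |Φ₂ (γ₁ * γ₂) - Φ₂ γ₁ - Φ₂ γ₂| ≤ C)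
    (h3₂ : ∀ (γ : Γ) (m : ℤ), Φ₂ (γ ^ m) = m * Φ₂ γ) :
    Φ₁ = Φ₂ :=
  homogeneous_quasimorphism_unique_general hG T π hπ hker Φ₁ Φ₂ h1₁ h2₁ h3₁ h1₂ h2₂ h3₂
end

section
/- Let r ≥ 1 and let Sp(2r,ℝ) denote the group of 2r×2r real matrices M satisfying M J Mᵀ = J, where J = fromBlocks 0 I_r (−I_r) 0. Every element of Sp(2r,ℝ) of the form M = fromBlocks a b 0 (aᵀ)⁻¹, where a is an r×r unit upper-triangular matrix (upper triangular with all diagonal entries 1), is a commutator: there exist g, h ∈ Sp(2r,ℝ) with M = g h g⁻¹ h⁻¹. -/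
open Matrix

section SymplecticAux

variable {r : ℕ}

/-- Downward (reverse) strong induction on `Fin r`. -/
private lemma fin_rev_ind {P : Fin r → Prop}
    (h : ∀ i : Fin r, (∀ k : Fin r, i < k → P k) → P i) : ∀ i, P i := by
  have H : ∀ m : ℕ, ∀ i : Fin r, r - (i : ℕ) ≤ m → P i := by
    intro m
    induction m with
    | zero => intro i hi; have := i.2; omega
    | succ m ih =>
      intro i _
      refine h i fun k hk => ih k ?_
      have hk' : (i : ℕ) < (k : ℕ) := hk
      have := k.2; have := i.2; omega
  intro i
  exact H r i (by omega)

/-- A unit upper-triangular matrix has determinant one. -/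
private lemma det_one_of_unitUpper (x : Matrix (Fin r) (Fin r) ℝ)
    (hd : ∀ i, x i i = 1) (ht : ∀ i j : Fin r, j < i → x i j = 0) : x.det = 1 := by
  rw [Matrix.det_of_upperTriangular (fun i j hij => ht i j hij)]
  simp [hd]

/-- Injectivity of `y ↦ d y d - a y` where `d = diagonal c` with `c i * c j ≠ 1` and
`a` is unit upper-triangular. -/
private lemma S_injective (c : Fin r → ℝ) (hc : ∀ i j, c i * c j ≠ 1)
    (a : Matrix (Fin r) (Fin r) ℝ) (had : ∀ i, a i i = 1)
    (hat : ∀ i j : Fin r, j < i → a i j = 0)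
    (y : Matrix (Fin r) (Fin r) ℝ)
    (h : diagonal c * y * diagonal c = a * y) : y = 0 := by
  have key : ∀ i : Fin r, ∀ j, y i j = 0 := by
    refine fin_rev_ind fun i ih j => ?_
    have h1 : c i * y i j * c j = ∑ k, a i k * y k j := by
      have h0 := congrFun (congrFun h i) j
      rw [Matrix.mul_diagonal, Matrix.diagonal_mul, Matrix.mul_apply] at h0
      exact h0
    have h2 : (∑ k, a i k * y k j) = y i j := by
      rw [Finset.sum_eq_single i]
      · rw [had i, one_mul]
      · intro k _ hk
        rcases lt_or_gt_of_ne hk with hlt | hgt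
        · rw [hat i k hlt, zero_mul]
        · rw [ih k hgt, mul_zero]
      · intro hi; exact absurd (Finset.mem_univ i) hi
    have h3 : (c i * c j - 1) * y i j = 0 := by
      have := h1.trans h2
      ring_nf
      ring_nf at this
      linarith
    rcases mul_eq_zero.mp h3 with h4 | h4
    · exact absurd (sub_eq_zero.mp h4) (hc i j)
    · exact h4
  ext i j; simp [key i j]

/-- Injectivity of `u ↦ d u d - a u aᵀ`. -/
private lemma S2_injective (c : Fin r → ℝ) (hc : ∀ i j, c i * c j ≠ 1)
    (a : Matrix (Fin r) (Fin r) ℝ) (had : ∀ i, a i i = 1)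
    (hat : ∀ i j : Fin r, j < i → a i j = 0)
    (u : Matrix (Fin r) (Fin r) ℝ)
    (h : diagonal c * u * diagonal c = a * u * aᵀ) : u = 0 := by
  have key : ∀ i : Fin r, ∀ j, u i j = 0 := by
    refine fin_rev_ind fun i ih => ?_
    refine fin_rev_ind fun j ihj => ?_
    have h1 : c i * u i j * c j = ∑ l, (∑ k, a i k * u k l) * a j l := by
      have h0 := congrFun (congrFun h i) j
      rw [Matrix.mul_diagonal, Matrix.diagonal_mul] at h0
      simp only [Matrix.mul_apply, Matrix.transpose_apply] at h0
      exact h0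
    have h2 : ∀ l, (∑ k, a i k * u k l) = u i l := by
      intro l
      rw [Finset.sum_eq_single i]
      · rw [had i, one_mul]
      · intro k _ hk
        rcases lt_or_gt_of_ne hk with hlt | hgt
        · rw [hat i k hlt, zero_mul]
        · rw [ih k hgt, mul_zero]
      · intro hi; exact absurd (Finset.mem_univ i) hi
    have h3 : (∑ l, (∑ k, a i k * u k l) * a j l) = u i j := by
      simp only [h2]
      rw [Finset.sum_eq_single j]
      · rw [had j, mul_one]
      · intro l _ hl
        rcases lt_or_gt_of_ne hl with hlt | hgt
        · rw [hat j l hlt, mul_zero]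
        · rw [ihj l hgt, zero_mul]
      · intro hj; exact absurd (Finset.mem_univ j) hj
    have h4 : (c i * c j - 1) * u i j = 0 := by
      have := h1.trans h3
      ring_nf
      ring_nf at this
      linarith
    rcases mul_eq_zero.mp h4 with h5 | h5
    · exact absurd (sub_eq_zero.mp h5) (hc i j)
    · exact h5
  ext i j; simp [key i j]

/-- Injectivity of `z ↦ d z - a z d` on strictly upper-triangular matrices. -/
private lemma T_injective (c : Fin r → ℝ) (hc : ∀ i j : Fin r, i ≠ j → c i ≠ c j)
    (a : Matrix (Fin r) (Fin r) ℝ) (had : ∀ i, a i i = 1)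
    (hat : ∀ i j : Fin r, j < i → a i j = 0)
    (z : Matrix (Fin r) (Fin r) ℝ) (hz : ∀ i j : Fin r, j ≤ i → z i j = 0)
    (h : diagonal c * z = a * z * diagonal c) : z = 0 := by
  have key : ∀ i : Fin r, ∀ j, z i j = 0 := by
    refine fin_rev_ind fun i ih j => ?_
    have h1 : c i * z i j = (∑ k, a i k * z k j) * c j := by
      have h0 := congrFun (congrFun h i) j
      rw [Matrix.diagonal_mul, Matrix.mul_diagonal] at h0
      simp only [Matrix.mul_apply] at h0
      exact h0
    have h2 : (∑ k, a i k * z k j) = z i j := by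
      rw [Finset.sum_eq_single i]
      · rw [had i, one_mul]
      · intro k _ hk
        rcases lt_or_gt_of_ne hk with hlt | hgt
        · rw [hat i k hlt, zero_mul]
        · rw [ih k hgt, mul_zero]
      · intro hi; exact absurd (Finset.mem_univ i) hi
    rcases eq_or_ne i j with rfl | hij
    · exact hz i i le_rfl
    · have h3 : (c i - c j) * z i j = 0 := by
        rw [h2] at h1
        ring_nf
        ring_nf at h1
        linarith
      rcases mul_eq_zero.mp h3 with h4 | h4
      · exact absurd (sub_eq_zero.mp h4) (hc i j hij)
      · exact h4
  ext i j; simp [key i j]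

end SymplecticAux

/-- In `Sp(2r,ℝ)`, every element of the nilpotent Iwasawa subgroup `N`, i.e. every
symplectic matrix of the form `fromBlocks a b 0 (aᵀ)⁻¹` with `a` unit upper-triangular,
is a single commutator of symplectic matrices. -/
theorem symplectic_nilpotent_is_commutator (r : ℕ) (hr : 1 ≤ r)
    (J : Matrix (Fin r ⊕ Fin r) (Fin r ⊕ Fin r) ℝ)
    (hJ : J = Matrix.fromBlocks 0 1 (-1) 0)
    (a b : Matrix (Fin r) (Fin r) ℝ)
    (ha_diag : ∀ i : Fin r, a i i = 1)
    (ha_tri : ∀ i j : Fin r, j < i → a i j = 0)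
    (M : Matrix (Fin r ⊕ Fin r) (Fin r ⊕ Fin r) ℝ)
    (hM : M = Matrix.fromBlocks a b 0 aᵀ⁻¹)
    (hMsymp : M * J * Mᵀ = J) :
    ∃ g h : Matrix (Fin r ⊕ Fin r) (Fin r ⊕ Fin r) ℝ,
      g * J * gᵀ = J ∧ h * J * hᵀ = J ∧ M = g * h * g⁻¹ * h⁻¹ := by
  classical
  -- the contracting diagonal
  set c : Fin r → ℝ := fun i => (2 : ℝ) ^ ((i : ℕ) + 1) with hc_def
  have hc1 : ∀ i j : Fin r, c i * c j ≠ 1 := by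
    intro i j
    have : c i * c j = (2 : ℝ) ^ ((i : ℕ) + 1 + ((j : ℕ) + 1)) := by
      rw [hc_def, pow_add]
    rw [this]
    have h2 : (1 : ℝ) < 2 ^ ((i : ℕ) + 1 + ((j : ℕ) + 1)) :=
      one_lt_pow₀ (by norm_num) (by omega)
    exact ne_of_gt h2
  have hcne : ∀ i j : Fin r, i ≠ j → c i ≠ c j := by
    intro i j hij hcij
    apply hij
    have hmono : StrictMono (fun n : ℕ => (2 : ℝ) ^ n) := fun m n hmn => by
      exact pow_lt_pow_right₀ (by norm_num) hmn
    have h2 : (i : ℕ) + 1 = (j : ℕ) + 1 := hmono.injective (by simpa [hc_def] using hcij)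
    exact Fin.ext (by omega)
  set d : Matrix (Fin r) (Fin r) ℝ := diagonal c with hd_def
  have hdetd : d.det ≠ 0 := by
    rw [hd_def, Matrix.det_diagonal]
    refine Finset.prod_ne_zero_iff.mpr fun i _ => ?_
    rw [hc_def]; positivity
  have hdu : IsUnit d.det := isUnit_iff_ne_zero.mpr hdetd
  have hdd : d * d⁻¹ = 1 := Matrix.mul_nonsing_inv _ hdu
  have hd'd : d⁻¹ * d = 1 := Matrix.nonsing_inv_mul _ hdu
  have hdt : dᵀ = d := by rw [hd_def, Matrix.diagonal_transpose]
  have hdit : (d⁻¹)ᵀ = d⁻¹ := by rw [Matrix.transpose_nonsing_inv, hdt]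
  -- invertibility of a
  have hadet : a.det = 1 := det_one_of_unitUpper a ha_diag ha_tri
  have hau : IsUnit a.det := by rw [hadet]; exact isUnit_one
  have haTdet : aᵀ.det = 1 := by rw [Matrix.det_transpose, hadet]
  have haTu : IsUnit aᵀ.det := by rw [haTdet]; exact isUnit_one
  have haT : aᵀ * aᵀ⁻¹ = 1 := Matrix.mul_nonsing_inv _ haTu
  -- the submodule of strictly upper triangular matrices
  set U : Submodule ℝ (Matrix (Fin r) (Fin r) ℝ) :=
    { carrier := {z | ∀ i j : Fin r, j ≤ i → z i j = 0}
      add_mem' := fun hz hw i j hij => by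
        simp [Matrix.add_apply, hz i j hij, hw i j hij]
      zero_mem' := fun i j _ => rfl
      smul_mem' := fun t z hz i j hij => by
        simp [Matrix.smul_apply, hz i j hij] } with hU_def
  -- the linear map T on matrices
  set T : Matrix (Fin r) (Fin r) ℝ →ₗ[ℝ] Matrix (Fin r) (Fin r) ℝ :=
    { toFun := fun z => d * z - a * z * d
      map_add' := fun z₁ z₂ => by noncomm_ring
      map_smul' := fun t z => by
        simp [mul_smul_comm, smul_mul_assoc, smul_sub] } with hT_def
  have hTapp : ∀ z, T z = d * z - a * z * d := fun z => rfl
  have hTU : ∀ z ∈ U, T z ∈ U := by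
    intro z hz i j hij
    have hz' : ∀ i j : Fin r, j ≤ i → z i j = 0 := hz
    have h1 : (∑ k, a i k * z k j) = 0 := by
      refine Finset.sum_eq_zero fun k _ => ?_
      rcases lt_or_ge k i with hk | hk
      · rw [ha_tri i k hk, zero_mul]
      · rw [hz' k j (hij.trans hk), mul_zero]
    show (d * z - a * z * d) i j = 0
    rw [Matrix.sub_apply, hd_def, Matrix.diagonal_mul, Matrix.mul_diagonal,
      Matrix.mul_apply, hz' i j hij, h1]
    ring
  have hTres_inj : Function.Injective (T.restrict hTU) := by
    rw [injective_iff_map_eq_zero]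
    intro z hz0
    have hz1 : T z.1 = 0 := congrArg Subtype.val hz0
    have hz2 : d * z.1 = a * z.1 * d := by
      have h := hz1
      rw [hTapp, sub_eq_zero] at h
      exact h
    exact Subtype.ext (T_injective c hcne a ha_diag ha_tri z.1 z.2 hz2)
  have hTres_surj : Function.Surjective (T.restrict hTU) :=
    LinearMap.injective_iff_surjective.mp hTres_inj
  -- target (a-1)*d is strictly upper triangular
  have htar : (a - 1) * d ∈ U := by
    intro i j hij
    show ((a - 1) * d) i j = 0
    rw [hd_def, Matrix.mul_diagonal, Matrix.sub_apply]
    rcases eq_or_lt_of_le hij with he | hlt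
    · subst he
      rw [ha_diag j, Matrix.one_apply_eq]; ring
    · rw [ha_tri i j hlt, Matrix.one_apply_ne (ne_of_lt hlt).symm]
      ring
  obtain ⟨z0, hz0⟩ := hTres_surj ⟨(a - 1) * d, htar⟩
  have hz0' : d * z0.1 - a * z0.1 * d = (a - 1) * d := congrArg Subtype.val hz0
  set z : Matrix (Fin r) (Fin r) ℝ := z0.1 with hz_def
  have hzU : ∀ i j : Fin r, j ≤ i → z i j = 0 := z0.2
  set x : Matrix (Fin r) (Fin r) ℝ := 1 + z with hx_def
  have hx_diag : ∀ i, x i i = 1 := by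
    intro i
    rw [hx_def, Matrix.add_apply, Matrix.one_apply_eq, hzU i i le_rfl]; ring
  have hx_tri : ∀ i j : Fin r, j < i → x i j = 0 := by
    intro i j hij
    rw [hx_def, Matrix.add_apply, Matrix.one_apply_ne (fun h => absurd h.symm (ne_of_lt hij)),
      hzU i j (le_of_lt hij)]
    ring
  have hxdet : x.det = 1 := det_one_of_unitUpper x hx_diag hx_tri
  have hxu : IsUnit x.det := by rw [hxdet]; exact isUnit_one
  have hxx : x * x⁻¹ = 1 := Matrix.mul_nonsing_inv _ hxu
  have hxTdet : xᵀ.det = 1 := by rw [Matrix.det_transpose, hxdet]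
  have hxTu : IsUnit xᵀ.det := by rw [hxTdet]; exact isUnit_one
  set w : Matrix (Fin r) (Fin r) ℝ := xᵀ⁻¹ with hw_def
  have hwxT : w * xᵀ = 1 := Matrix.nonsing_inv_mul _ hxTu
  have hxTw : xᵀ * w = 1 := Matrix.mul_nonsing_inv _ hxTu
  have hwT : wᵀ = x⁻¹ := by
    rw [hw_def, ← Matrix.transpose_nonsing_inv, Matrix.transpose_transpose]
  -- E1 : d x = a x d
  have hE1 : d * x = a * x * d := by
    have h1 : d * z = a * z * d + (a * d - d) := by
      have h2 : d * z - a * z * d = a * d - d := by rw [hz0']; noncomm_ring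
      calc d * z = (d * z - a * z * d) + a * z * d := by noncomm_ring
        _ = (a * d - d) + a * z * d := by rw [h2]
        _ = a * z * d + (a * d - d) := by noncomm_ring
    rw [hx_def]
    calc d * (1 + z) = d + d * z := by noncomm_ring
      _ = d + (a * z * d + (a * d - d)) := by rw [h1]
      _ = a * (1 + z) * d := by noncomm_ring
  -- transposed versions
  have hE1T : xᵀ * d = d * (xᵀ * aᵀ) := by
    have := congrArg Matrix.transpose hE1
    simp only [Matrix.transpose_mul, hdt] at this
    exact this
  -- E3 : d⁻¹ w = aᵀ⁻¹ w d⁻¹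
  have hE3 : d⁻¹ * w = aᵀ⁻¹ * w * d⁻¹ := by
    have h1 : (xᵀ * d)⁻¹ = (d * (xᵀ * aᵀ))⁻¹ := by rw [hE1T]
    rw [Matrix.mul_inv_rev, Matrix.mul_inv_rev, Matrix.mul_inv_rev] at h1
    rw [hw_def]
    calc d⁻¹ * xᵀ⁻¹ = (aᵀ⁻¹ * xᵀ⁻¹) * d⁻¹ := h1
      _ = aᵀ⁻¹ * xᵀ⁻¹ * d⁻¹ := by noncomm_ring
  -- the S linear map and y
  set S : Matrix (Fin r) (Fin r) ℝ →ₗ[ℝ] Matrix (Fin r) (Fin r) ℝ :=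
    { toFun := fun y => d * y * d - a * y
      map_add' := fun y₁ y₂ => by noncomm_ring
      map_smul' := fun t y => by
        simp [mul_smul_comm, smul_mul_assoc, smul_sub] } with hS_def
  have hSapp : ∀ y, S y = d * y * d - a * y := fun y => rfl
  have hSinj : Function.Injective S := by
    rw [injective_iff_map_eq_zero]
    intro y hy
    apply S_injective c hc1 a ha_diag ha_tri
    have : d * y * d - a * y = 0 := hy
    rw [sub_eq_zero] at this
    exact this
  have hSsurj : Function.Surjective S := LinearMap.injective_iff_surjective.mp hSinj
  obtain ⟨y, hy⟩ := hSsurj (b * w)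
  have hE2 : d * y * d = a * y + b * w := by
    have : d * y * d - a * y = b * w := hy
    rw [sub_eq_iff_eq_add] at this
    rw [this, add_comm]
  have hE2T : d * yᵀ * d = yᵀ * aᵀ + x⁻¹ * bᵀ := by
    have := congrArg Matrix.transpose hE2
    simp only [Matrix.transpose_mul, Matrix.transpose_add, hdt, hwT] at this
    rw [← mul_assoc] at this
    exact this
  -- from symplecticity of M : a bᵀ = b aᵀ
  have hab : a * bᵀ = b * aᵀ := by
    rw [hM, hJ] at hMsymp
    simp only [Matrix.fromBlocks_transpose, Matrix.fromBlocks_multiply,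
      Matrix.mul_zero, Matrix.zero_mul, Matrix.mul_one, Matrix.one_mul,
      add_zero, zero_add, Matrix.transpose_zero, Matrix.mul_neg, Matrix.neg_mul,
      mul_neg_one, neg_zero] at hMsymp
    have h1 := congrArg Matrix.toBlocks₁₁ hMsymp
    simp only [Matrix.toBlocks_fromBlocks₁₁] at h1
    -- h1 should be of the form  -(b * aᵀ) + a * bᵀ = 0  (possibly reordered)
    have h2 : a * bᵀ - b * aᵀ = 0 := by
      rw [← h1]; noncomm_ring
    rw [sub_eq_zero] at h2
    exact h2
  -- symmetry: x yᵀ = y xᵀ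
  have h5 : d * (x * yᵀ) * d = a * (x * yᵀ) * aᵀ + a * bᵀ := by
    calc d * (x * yᵀ) * d = (d * x) * (yᵀ * d) := by noncomm_ring
      _ = (a * x * d) * (yᵀ * d) := by rw [hE1]
      _ = (a * x) * (d * yᵀ * d) := by noncomm_ring
      _ = (a * x) * (yᵀ * aᵀ + x⁻¹ * bᵀ) := by rw [hE2T]
      _ = a * (x * yᵀ) * aᵀ + a * ((x * x⁻¹) * bᵀ) := by noncomm_ring
      _ = a * (x * yᵀ) * aᵀ + a * bᵀ := by rw [hxx, one_mul]
  have h6 : d * (y * xᵀ) * d = a * (y * xᵀ) * aᵀ + b * aᵀ := by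
    calc d * (y * xᵀ) * d = (d * y) * (xᵀ * d) := by noncomm_ring
      _ = (d * y) * (d * (xᵀ * aᵀ)) := by rw [hE1T]
      _ = (d * y * d) * (xᵀ * aᵀ) := by noncomm_ring
      _ = (a * y + b * w) * (xᵀ * aᵀ) := by rw [hE2]
      _ = a * (y * xᵀ) * aᵀ + b * ((w * xᵀ) * aᵀ) := by noncomm_ring
      _ = a * (y * xᵀ) * aᵀ + b * aᵀ := by rw [hwxT, one_mul]
  have hsym : x * yᵀ = y * xᵀ := by
    have hu : d * (x * yᵀ - y * xᵀ) * d = a * (x * yᵀ - y * xᵀ) * aᵀ := by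
      have : d * (x * yᵀ - y * xᵀ) * d
          = d * (x * yᵀ) * d - d * (y * xᵀ) * d := by noncomm_ring
      rw [this, h5, h6, hab]
      noncomm_ring
    have := S2_injective c hc1 a ha_diag ha_tri _ hu
    rw [sub_eq_zero] at this
    exact this
  -- assemble the two symplectic matrices
  set D : Matrix (Fin r ⊕ Fin r) (Fin r ⊕ Fin r) ℝ := Matrix.fromBlocks d 0 0 d⁻¹
    with hD_def
  set X : Matrix (Fin r ⊕ Fin r) (Fin r ⊕ Fin r) ℝ := Matrix.fromBlocks x y 0 w
    with hX_def
  refine ⟨D, X, ?_, ?_, ?_⟩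
  · -- D is symplectic
    rw [hJ, hD_def]
    simp only [Matrix.fromBlocks_transpose, Matrix.fromBlocks_multiply,
      Matrix.mul_zero, Matrix.zero_mul, Matrix.mul_one, Matrix.one_mul,
      add_zero, zero_add, Matrix.transpose_zero, Matrix.mul_neg, Matrix.neg_mul,
      mul_neg_one, neg_zero, hdt, hdit]
    rw [hdd, hd'd]
  · -- X is symplectic
    rw [hJ, hX_def]
    simp only [Matrix.fromBlocks_transpose, Matrix.fromBlocks_multiply,
      Matrix.mul_zero, Matrix.zero_mul, Matrix.mul_one, Matrix.one_mul,
      add_zero, zero_add, Matrix.transpose_zero, Matrix.mul_neg, Matrix.neg_mul,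
      mul_neg_one, neg_zero, hwT]
    rw [hxx, hwxT, hsym, neg_add_cancel]
  · -- M is the commutator of D and X
    have hDdet : IsUnit D.det := by
      rw [hD_def, Matrix.det_fromBlocks_zero₂₁, Matrix.det_nonsing_inv,
        Ring.inverse_eq_inv']
      exact (isUnit_iff_ne_zero.mpr (mul_ne_zero hdetd (inv_ne_zero hdetd)))
    have hXdet : IsUnit X.det := by
      rw [hX_def, Matrix.det_fromBlocks_zero₂₁, hxdet, hw_def,
        Matrix.det_nonsing_inv, hxTdet]
      simp
    have hDX : D * X = M * X * D := by
      have hE2' : d * y = (a * y + b * w) * d⁻¹ := by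
        rw [← hE2]
        calc d * y = d * y * (d * d⁻¹) := by rw [hdd, mul_one]
          _ = d * y * d * d⁻¹ := by noncomm_ring
      rw [hM, hD_def, hX_def]
      simp only [Matrix.fromBlocks_multiply, Matrix.mul_zero, Matrix.zero_mul,
        add_zero, zero_add]
      rw [hE1, hE2', hE3]
    have hDD : D * D⁻¹ = 1 := Matrix.mul_nonsing_inv _ hDdet
    have hXX : X * X⁻¹ = 1 := Matrix.mul_nonsing_inv _ hXdet
    calc M = M * X * X⁻¹ := by rw [mul_assoc, hXX, mul_one]
      _ = M * X * (D * D⁻¹) * X⁻¹ := by rw [hDD, mul_one]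
      _ = (M * X * D) * D⁻¹ * X⁻¹ := by noncomm_ring
      _ = D * X * D⁻¹ * X⁻¹ := by rw [← hDX]
end

section
/- Let r ≥ 1 and let Sp(2r,ℝ) denote the group of 2r×2r real matrices M satisfying M J Mᵀ = J, where J = fromBlocks 0 I_r (−I_r) 0. Every matrix of the form D = fromBlocks d 0 0 d⁻¹, where d is an r×r diagonal matrix with strictly positive diagonal entries, is a product of at most r commutators of elements of Sp(2r,ℝ): there exist pairs (g₁,h₁),…,(g_r,h_r) in Sp(2r,ℝ) with D = (g₁h₁g₁⁻¹h₁⁻¹)···(g_r h_r g_r⁻¹ h_r⁻¹). -/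
open Matrix

namespace SpCommutatorAux

variable {r : ℕ}

/-- A `2r × 2r` matrix built from four diagonal blocks. -/
noncomputable def FB (a b c e : Fin r → ℝ) : Matrix (Fin r ⊕ Fin r) (Fin r ⊕ Fin r) ℝ :=
  Matrix.fromBlocks (Matrix.diagonal a) (Matrix.diagonal b) (Matrix.diagonal c) (Matrix.diagonal e)

lemma FB_mul (a b c e a' b' c' e' : Fin r → ℝ) :
    FB a b c e * FB a' b' c' e' =
      FB (a*a'+b*c') (a*b'+b*e') (c*a'+e*c') (c*b'+e*e') := by
  simp only [FB, Matrix.fromBlocks_multiply, Matrix.diagonal_mul_diagonal, Matrix.diagonal_add]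
  rfl

lemma FB_transpose (a b c e : Fin r → ℝ) : (FB a b c e)ᵀ = FB a c b e := by
  simp [FB, Matrix.fromBlocks_transpose, Matrix.diagonal_transpose]

lemma FB_congr {a b c e a' b' c' e' : Fin r → ℝ}
    (h1 : a = a') (h2 : b = b') (h3 : c = c') (h4 : e = e') :
    FB a b c e = FB a' b' c' e' := by rw [h1, h2, h3, h4]

lemma diag_zero' : Matrix.diagonal (0 : Fin r → ℝ) = 0 := Matrix.diagonal_zero

lemma diag_one' : Matrix.diagonal (1 : Fin r → ℝ) = 1 := Matrix.diagonal_one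

lemma diag_negone' : Matrix.diagonal (-1 : Fin r → ℝ) = -1 := by
  ext i j
  rcases i with i | i <;> rcases j with j | j <;>
    simp [Matrix.diagonal_apply, Sum.elim_inl, Sum.elim_inr] <;> aesop

lemma FB_one : (FB 1 0 0 1 : Matrix (Fin r ⊕ Fin r) (Fin r ⊕ Fin r) ℝ) = 1 := by
  rw [FB, diag_zero', diag_one', Matrix.fromBlocks_one]

lemma J_eq_FB : (Matrix.fromBlocks 0 1 (-1) 0 : Matrix (Fin r ⊕ Fin r) (Fin r ⊕ Fin r) ℝ)
    = FB 0 1 (-1) 0 := by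
  rw [FB, diag_zero', diag_one', diag_negone']

lemma FB_prod : ∀ (n : ℕ) (f f' : Fin n → Fin r → ℝ),
    (List.ofFn fun i => FB (f i) 0 0 (f' i)).prod = FB (∏ i, f i) 0 0 (∏ i, f' i)
  | 0, f, f' => by simp [FB_one]
  | n+1, f, f' => by
    rw [List.ofFn_succ, List.prod_cons, FB_prod n (fun i => f i.succ) (fun i => f' i.succ),
      FB_mul, Fin.prod_univ_succ f, Fin.prod_univ_succ f']
    refine FB_congr ?_ ?_ ?_ ?_ <;> funext j <;> simp

def uu (i : Fin r) : Fin r → ℝ := fun j => if j = i then 0 else 1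
def vv (i : Fin r) : Fin r → ℝ := fun j => if j = i then 1 else 0
noncomputable def ee (d : Fin r → ℝ) (i : Fin r) : Fin r → ℝ :=
  fun j => if j = i then (Real.sqrt (d i))⁻¹ else 1
def ff (d : Fin r → ℝ) (i : Fin r) : Fin r → ℝ := fun j => if j = i then d i else 1

end SpCommutatorAux

open SpCommutatorAux

/-- In `Sp(2r,ℝ)`, every element of the abelian Iwasawa subgroup `A`, i.e. every matrix
`fromBlocks d 0 0 d⁻¹` with `d` diagonal with strictly positive entries, is a product of
(at most) `r` commutators of symplectic matrices. -/
theorem symplectic_diagonal_is_product_of_commutators (r : ℕ) (hr : 1 ≤ r)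
    (J : Matrix (Fin r ⊕ Fin r) (Fin r ⊕ Fin r) ℝ)
    (hJ : J = Matrix.fromBlocks 0 1 (-1) 0)
    (d : Fin r → ℝ) (hd : ∀ i, 0 < d i)
    (D : Matrix (Fin r ⊕ Fin r) (Fin r ⊕ Fin r) ℝ)
    (hD : D = Matrix.fromBlocks (Matrix.diagonal d) 0 0 (Matrix.diagonal d)⁻¹) :
    ∃ g h : Fin r → Matrix (Fin r ⊕ Fin r) (Fin r ⊕ Fin r) ℝ,
      (∀ i, g i * J * (g i)ᵀ = J ∧ h i * J * (h i)ᵀ = J) ∧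
      D = (List.ofFn fun i => g i * h i * (g i)⁻¹ * (h i)⁻¹).prod := by
  subst hJ hD
  have hsqrt : ∀ i : Fin r, Real.sqrt (d i) ≠ 0 := fun i =>
    ne_of_gt (Real.sqrt_pos.mpr (hd i))
  refine ⟨fun i => FB (uu i) (vv i) (-(vv i)) (uu i),
          fun i => FB (ee d i) 0 0 (ee d i)⁻¹, fun i => ⟨?_, ?_⟩, ?_⟩
  · -- g is symplectic
    rw [J_eq_FB, FB_transpose, FB_mul, FB_mul]
    refine FB_congr ?_ ?_ ?_ ?_ <;> funext j <;> by_cases hj : j = i <;>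
      simp [uu, vv, hj]
  · -- h is symplectic
    rw [J_eq_FB, FB_transpose, FB_mul, FB_mul]
    refine FB_congr ?_ ?_ ?_ ?_ <;> funext j <;> by_cases hj : j = i <;>
      simp [ee, hj, hsqrt i]
  · -- the product identity
    have hginv : ∀ i : Fin r, (FB (uu i) (vv i) (-(vv i)) (uu i))⁻¹
        = FB (uu i) (-(vv i)) (vv i) (uu i) := by
      intro i
      refine Matrix.inv_eq_right_inv ?_
      rw [FB_mul, ← FB_one]
      refine FB_congr ?_ ?_ ?_ ?_ <;> funext j <;> by_cases hj : j = i <;> simp [uu, vv, hj]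
    have hhinv : ∀ i : Fin r, (FB (ee d i) 0 0 (ee d i)⁻¹)⁻¹
        = FB (ee d i)⁻¹ 0 0 (ee d i) := by
      intro i
      refine Matrix.inv_eq_right_inv ?_
      rw [FB_mul, ← FB_one]
      refine FB_congr ?_ ?_ ?_ ?_ <;> funext j <;> by_cases hj : j = i <;> simp [ee, hj, hsqrt i]
    have hcomm : ∀ i : Fin r, FB (uu i) (vv i) (-(vv i)) (uu i) * FB (ee d i) 0 0 (ee d i)⁻¹ *
        (FB (uu i) (vv i) (-(vv i)) (uu i))⁻¹ * (FB (ee d i) 0 0 (ee d i)⁻¹)⁻¹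
        = FB (ff d i) 0 0 (ff d⁻¹ i) := by
      intro i
      rw [hginv, hhinv, FB_mul, FB_mul, FB_mul]
      refine FB_congr ?_ ?_ ?_ ?_ <;> funext j <;> by_cases hj : j = i <;>
        simp [uu, vv, ee, ff, hj, hsqrt i] <;>
        first
          | rw [Real.mul_self_sqrt (le_of_lt (hd i))]
          | rw [← mul_inv, Real.mul_self_sqrt (le_of_lt (hd i))]
    have hdinv : (Matrix.diagonal d)⁻¹ = Matrix.diagonal d⁻¹ := by
      refine Matrix.inv_eq_right_inv ?_
      rw [Matrix.diagonal_mul_diagonal,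
        show (fun i => d i * d⁻¹ i) = (1 : Fin r → ℝ) from
          funext fun j => mul_inv_cancel₀ (ne_of_gt (hd j)), diag_one']
    simp only [hcomm, FB_prod]
    have h1 : (∏ i, ff d i) = d := by
      funext j
      simp [ff, Finset.prod_apply, Finset.prod_ite_eq]
    have h2 : (∏ i, ff d⁻¹ i) = d⁻¹ := by
      funext j
      simp [ff, Finset.prod_apply, Finset.prod_ite_eq]
    rw [h1, h2, hdinv, FB, diag_zero']
end

section
/- Let u be an n×n complex unitary matrix with det(I + u) ≠ 0. Then the matrix-valued function s ↦ (sI − u)⁻¹ − (s−1)⁻¹ I is integrable on (−∞, 0), and the matrix L = ∫_{−∞}^{0} [(sI − u)⁻¹ − (s−1)⁻¹ I] ds satisfies: (i) exp(L) = u (matrix exponential); (ii) exp(tr L) = det u; (iii) det(I + u⁻¹) ≠ 0 and the corresponding integral L' = ∫_{−∞}^{0} [(sI − u⁻¹)⁻¹ − (s−1)⁻¹ I] ds equals −L. -/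
open Matrix MeasureTheory

attribute [local instance] Matrix.normedAddCommGroup Matrix.normedSpace

open Set Filter Topology in
lemma scalar_log_lemma (l : ℂ) (him : l.im ≠ 0 ∨ l = 1) (habs : ‖l‖ = 1) :
    MeasureTheory.IntegrableOn (fun s : ℝ => ((s:ℂ) - l)⁻¹ - ((s:ℂ) - 1)⁻¹) (Set.Iio (0:ℝ)) ∧
    ∫ s in Set.Iio (0:ℝ), (((s:ℂ) - l)⁻¹ - ((s:ℂ) - 1)⁻¹) = Complex.log l := by
  rcases him with him | rfl
  swap
  · simp
  set g : ℝ → ℂ := fun s => ((s:ℂ) - l)⁻¹ - ((s:ℂ) - 1)⁻¹ with hg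
  set G : ℝ → ℂ := fun t => g (-t) with hG
  have htl : ∀ t : ℝ, (t:ℂ) + l ≠ 0 := by
    intro t h
    apply him
    have := congrArg Complex.im h
    simpa using this
  have ht1 : ∀ t : ℝ, 0 ≤ t → (t:ℂ) + 1 ≠ 0 := by
    intro t ht h
    have := congrArg Complex.re h
    simp at this
    linarith
  -- G rewritten
  have hGrw : ∀ t : ℝ, 0 ≤ t → G t = (l - 1) * (((t:ℂ) + 1)⁻¹ * ((t:ℂ) + l)⁻¹) := by
    intro t ht
    have h1 := ht1 t ht
    have h2 := htl t
    simp only [hG, hg]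
    push_cast
    have e1 : -(t:ℂ) - l = -((t:ℂ) + l) := by ring
    have e2 : -(t:ℂ) - 1 = -((t:ℂ) + 1) := by ring
    rw [e1, e2, inv_neg, inv_neg]
    field_simp
    ring
  -- continuity
  have hcont : ContinuousOn (fun t : ℝ => (l - 1) * (((t:ℂ) + 1)⁻¹ * ((t:ℂ) + l)⁻¹)) (Ici 0) := by
    apply continuousOn_const.mul
    apply ContinuousOn.mul
    · exact ContinuousOn.inv₀ (Complex.continuous_ofReal.continuousOn.add continuousOn_const)
        fun t ht => ht1 t ht
    · exact ContinuousOn.inv₀ (Complex.continuous_ofReal.continuousOn.add continuousOn_const)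
        fun t _ => htl t
  -- integrability of H on Ioi 0
  have hHint : IntegrableOn (fun t : ℝ => (l - 1) * (((t:ℂ) + 1)⁻¹ * ((t:ℂ) + l)⁻¹)) (Ioi 0) := by
    rw [← Set.Ioc_union_Ioi_eq_Ioi (by norm_num : (0:ℝ) ≤ 2)]
    apply IntegrableOn.union
    · exact ((hcont.mono (Icc_subset_Ici_self)).integrableOn_Icc).mono_set Ioc_subset_Icc_self
    · have hd : IntegrableOn (fun t : ℝ => (2 * ‖l-1‖) * t ^ (-2:ℝ)) (Ioi 2) :=
        (integrableOn_Ioi_rpow_of_lt (by norm_num) (by norm_num)).const_mul _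
      apply Integrable.mono hd
      · exact (hcont.mono (fun t (ht : t ∈ Ioi 2) => le_of_lt (lt_trans two_pos ht))).aestronglyMeasurable
          measurableSet_Ioi
      · rw [ae_restrict_iff' measurableSet_Ioi]
        filter_upwards with t
        intro (ht : 2 < t)
        have ht0 : (0:ℝ) < t := lt_trans two_pos ht
        have hb1 : t ≤ ‖(t:ℂ) + 1‖ := by
          have : ((t:ℂ) + 1) = ((t + 1 : ℝ) : ℂ) := by push_cast; ring
          rw [this, Complex.norm_real, Real.norm_eq_abs]
          rw [abs_of_pos (by linarith)]
          linarith
        have hb2 : t/2 ≤ ‖(t:ℂ) + l‖ := by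
          have h2 := norm_sub_norm_le ((t:ℂ)) (-l)
          simp only [sub_neg_eq_add, norm_neg] at h2
          rw [Complex.norm_real, Real.norm_eq_abs, habs, abs_of_pos ht0] at h2
          linarith
        have hrp : t ^ (-2:ℝ) = (t^2)⁻¹ := by
          rw [Real.rpow_neg ht0.le, show (2:ℝ) = ((2:ℕ):ℝ) by norm_num, Real.rpow_natCast]
        rw [Real.norm_eq_abs, abs_of_nonneg (by positivity), hrp]
        rw [norm_mul, norm_mul, norm_inv, norm_inv]
        calc ‖l-1‖ * ((‖(t:ℂ)+1‖)⁻¹ * (‖(t:ℂ)+l‖)⁻¹)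
            ≤ ‖l-1‖ * (t⁻¹ * (t/2)⁻¹) := by
              gcongr
          _ = 2 * ‖l-1‖ * (t^2)⁻¹ := by field_simp
  have hGint : IntegrableOn G (Ioi 0) :=
    hHint.congr_fun (fun t ht => (hGrw t (le_of_lt ht)).symm) measurableSet_Ioi
  -- FTC
  have hval : ∫ t in Ioi (0:ℝ), G t = Complex.log l := by
    have hder : ∀ t ∈ Ici (0:ℝ), HasDerivAt
        (fun t : ℝ => -Complex.log (((t:ℂ) + l)/((t:ℂ) + 1))) (G t) t := by
      intro t ht
      have h1 := ht1 t ht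
      have h2 := htl t
      have hnum : HasDerivAt (fun y : ℝ => ((y:ℂ) + l)) 1 t := by
        simpa using ((hasDerivAt_id ((t:ℝ):ℂ)).add_const l).comp_ofReal
      have hden : HasDerivAt (fun y : ℝ => ((y:ℂ) + 1)) 1 t := by
        simpa using ((hasDerivAt_id ((t:ℝ):ℂ)).add_const 1).comp_ofReal
      have hW := hnum.div hden h1
      have hslit : ((t:ℂ) + l)/((t:ℂ) + 1) ∈ Complex.slitPlane := by
        right
        rw [Complex.div_im]
        have hre : ((t:ℂ) + 1).re = t + 1 := by simp
        have him1 : ((t:ℂ) + 1).im = 0 := by simp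
        have him2 : ((t:ℂ) + l).im = l.im := by simp
        rw [hre, him1, him2]
        simp only [mul_zero, zero_div, sub_zero]
        have hns : 0 < Complex.normSq ((t:ℂ) + 1) := by
          rw [Complex.normSq_pos]; exact h1
        have htp : (0:ℝ) < t + 1 := by have : (0:ℝ) ≤ t := ht; linarith
        intro hcon
        rcases mul_eq_zero.1 ((div_eq_zero_iff.1 hcon).resolve_right hns.ne') with h | h
        · exact him h
        · linarith
      have hlog := (hW.clog_real hslit).neg
      convert hlog using 1
      case e'_8 => rfl
      case e'_4 => rfl
      show G t = _
      rw [hGrw t ht]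
      have h3 : ((t:ℂ) + l)/((t:ℂ) + 1) ≠ 0 := div_ne_zero h2 h1
      simp only [Pi.div_apply]
      field_simp
      ring
    have htend : Tendsto (fun t : ℝ => -Complex.log (((t:ℂ) + l)/((t:ℂ) + 1)))
        atTop (𝓝 0) := by
      have hinv : Tendsto (fun t : ℝ => ((t:ℂ) + 1)⁻¹) atTop (𝓝 0) := by
        have hre : Tendsto (fun t : ℝ => (t + 1)⁻¹) atTop (𝓝 0) :=
          tendsto_inv_atTop_zero.comp (tendsto_atTop_add_const_right _ 1 tendsto_id)
        have := (Complex.continuous_ofReal.tendsto 0).comp hre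
        simp only [Complex.ofReal_zero] at this
        convert this using 1
        funext t
        simp only [Function.comp_apply, Complex.ofReal_inv, Complex.ofReal_add,
          Complex.ofReal_one]
      have hW1 : Tendsto (fun t : ℝ => ((t:ℂ) + l)/((t:ℂ) + 1)) atTop (𝓝 1) := by
        have h2 : Tendsto (fun t : ℝ => 1 + (l - 1) * ((t:ℂ) + 1)⁻¹) atTop (𝓝 1) := by
          have := (tendsto_const_nhds (x := (1:ℂ)) (f := atTop (α := ℝ))).add
            ((tendsto_const_nhds (x := l - 1) (f := atTop (α := ℝ))).mul hinv)
          simpa using this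
        apply h2.congr'
        filter_upwards [eventually_ge_atTop (0:ℝ)] with t ht
        have h1 := ht1 t ht
        field_simp
        ring
      have hcl : Tendsto (fun t : ℝ => Complex.log (((t:ℂ) + l)/((t:ℂ) + 1)))
          atTop (𝓝 (Complex.log 1)) :=
        (continuousAt_clog (by simp [Complex.slitPlane] : (1:ℂ) ∈ Complex.slitPlane)).tendsto.comp hW1
      rw [Complex.log_one] at hcl
      simpa using hcl.neg
    have := integral_Ioi_of_hasDerivAt_of_tendsto' hder hGint htend
    rw [this]
    simp
  -- transfer to Iio
  have hiio_int : IntegrableOn g (Iio 0) := by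
    have h1 : Integrable (Set.indicator (Ioi (0:ℝ)) G) volume :=
      (integrable_indicator_iff measurableSet_Ioi).2 hGint
    have h2 := h1.comp_neg
    have h3 : (fun t : ℝ => Set.indicator (Ioi (0:ℝ)) G (-t)) = Set.indicator (Iio (0:ℝ)) g := by
      funext t
      simp only [Set.indicator_apply, Set.mem_Ioi, Set.mem_Iio]
      by_cases ht : t < 0
      · rw [if_pos (by linarith), if_pos ht]
        simp [hG]
      · rw [if_neg (by simp; linarith [not_lt.1 ht]), if_neg ht]
    rw [h3] at h2
    exact (integrable_indicator_iff measurableSet_Iio).1 h2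
  have hiio_val : ∫ s in Iio (0:ℝ), g s = Complex.log l := by
    have h0 := integral_comp_neg_Ioi (0:ℝ) g
    rw [neg_zero] at h0
    rw [← MeasureTheory.integral_Iic_eq_integral_Iio, ← h0]
    exact hval
  exact ⟨hiio_int, hiio_val⟩

open Set Filter Topology in
lemma diagonal_eq_sum_single {n : ℕ} (w : Fin n → ℂ) :
    Matrix.diagonal w = ∑ i, w i • Matrix.diagonal (Pi.single i (1:ℂ)) := by
  ext j k
  simp only [Matrix.sum_apply, Matrix.smul_apply, Matrix.diagonal_apply, Pi.single_apply,
    smul_ite, smul_zero]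
  by_cases h : j = k
  · subst h
    simp [Finset.sum_ite_eq]
  · simp [h]

open Set Filter Topology in
lemma conj_smul_one {n : ℕ} (P Q : Matrix (Fin n) (Fin n) ℂ) (hPQ : P * Q = 1) (c : ℂ) :
    c • (1 : Matrix (Fin n) (Fin n) ℂ) = P * Matrix.diagonal (fun _ => c) * Q := by
  have h1 : Matrix.diagonal (fun _ : Fin n => c) = c • (1 : Matrix (Fin n) (Fin n) ℂ) := by
    ext j k
    by_cases h : j = k
    · subst h; simp
    · simp [Matrix.diagonal_apply_ne _ h, Matrix.one_apply_ne h]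
  rw [h1, Matrix.mul_smul, Matrix.smul_mul, mul_one, hPQ]

open Set Filter Topology in
lemma conj_diag_inv {n : ℕ} (P Q : Matrix (Fin n) (Fin n) ℂ)
    (hPQ : P * Q = 1) (hQP : Q * P = 1) (d : Fin n → ℂ) (hd : ∀ i, d i ≠ 0) :
    (P * Matrix.diagonal d * Q)⁻¹ = P * Matrix.diagonal (fun i => (d i)⁻¹) * Q := by
  apply Matrix.inv_eq_right_inv
  calc P * Matrix.diagonal d * Q * (P * Matrix.diagonal (fun i => (d i)⁻¹) * Q)
      = P * (Matrix.diagonal d * (Q * P) * Matrix.diagonal (fun i => (d i)⁻¹)) * Q := by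
        simp only [Matrix.mul_assoc]
    _ = 1 := by
        rw [hQP, Matrix.mul_one, Matrix.diagonal_mul_diagonal]
        have : (fun i => d i * (d i)⁻¹) = fun _ : Fin n => (1:ℂ) := by
          funext i; exact mul_inv_cancel₀ (hd i)
        rw [this, Matrix.diagonal_one, Matrix.mul_one, hPQ]

open Set Filter Topology in
lemma conj_diag_integral {n : ℕ} (P Q : Matrix (Fin n) (Fin n) ℂ)
    (hPQ : P * Q = 1) (hQP : Q * P = 1) (lam : Fin n → ℂ)
    (hlam : ∀ i, (lam i).im ≠ 0 ∨ lam i = 1) (habs : ∀ i, ‖lam i‖ = 1) :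
    @MeasureTheory.IntegrableOn ℝ _ _ _ SeminormedAddGroup.toContinuousENorm (fun s : ℝ =>
      (s • (1 : Matrix (Fin n) (Fin n) ℂ) - P * Matrix.diagonal lam * Q)⁻¹ -
        (s - 1)⁻¹ • (1 : Matrix (Fin n) (Fin n) ℂ)) (Set.Iio (0:ℝ)) volume ∧
    (∫ s in Set.Iio (0:ℝ), ((s • (1 : Matrix (Fin n) (Fin n) ℂ) - P * Matrix.diagonal lam * Q)⁻¹ -
        (s - 1)⁻¹ • (1 : Matrix (Fin n) (Fin n) ℂ))) =
      P * Matrix.diagonal (fun i => Complex.log (lam i)) * Q := by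
  classical
  set C : Fin n → Matrix (Fin n) (Fin n) ℂ := fun i => P * Matrix.diagonal (Pi.single i 1) * Q
    with hC
  have hconj : ∀ w : Fin n → ℂ, P * Matrix.diagonal w * Q = ∑ i, w i • C i := by
    intro w
    rw [diagonal_eq_sum_single w, Matrix.mul_sum, Matrix.sum_mul]
    congr 1
    funext i
    rw [Matrix.mul_smul, Matrix.smul_mul]
  have hrep : ∀ s ∈ Set.Iio (0:ℝ),
      (s • (1 : Matrix (Fin n) (Fin n) ℂ) - P * Matrix.diagonal lam * Q)⁻¹ -
        (s - 1)⁻¹ • (1 : Matrix (Fin n) (Fin n) ℂ) =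
      ∑ i, (((s:ℂ) - lam i)⁻¹ - ((s:ℂ) - 1)⁻¹) • C i := by
    intro s hs
    have hs0 : s < 0 := hs
    have hsmul : ∀ (r : ℝ) (M : Matrix (Fin n) (Fin n) ℂ), r • M = ((r:ℝ):ℂ) • M := by
      intro r M; ext j k; simp [Matrix.smul_apply, Complex.real_smul]
    have hd : ∀ i, (s:ℂ) - lam i ≠ 0 := by
      intro i
      rcases hlam i with h | h
      · intro hcon
        apply h
        have := congrArg Complex.im hcon
        simpa using this.symm
      · rw [h]
        have : ((s:ℂ) - 1) = ((s - 1 : ℝ) : ℂ) := by push_cast; ring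
        rw [this]
        exact Complex.ofReal_ne_zero.2 (by linarith)
    have hstep : s • (1 : Matrix (Fin n) (Fin n) ℂ) - P * Matrix.diagonal lam * Q =
        P * Matrix.diagonal (fun i => (s:ℂ) - lam i) * Q := by
      rw [hsmul s, conj_smul_one P Q hPQ ((s:ℝ):ℂ)]
      rw [← Matrix.sub_mul, ← Matrix.mul_sub, Matrix.diagonal_sub]
    rw [hstep, conj_diag_inv P Q hPQ hQP _ hd]
    have hone : ((s:ℝ) - 1)⁻¹ • (1 : Matrix (Fin n) (Fin n) ℂ) =
        P * Matrix.diagonal (fun _ : Fin n => ((s:ℂ) - 1)⁻¹) * Q := by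
      have h2 : (((s - 1:ℝ))⁻¹ : ℂ) = ((s:ℂ) - 1)⁻¹ := by push_cast; ring
      rw [hsmul (s-1)⁻¹, conj_smul_one P Q hPQ ((((s:ℝ)-1)⁻¹ : ℝ) : ℂ)]
      congr 1
      funext j
      push_cast
      ring
    rw [hone, ← Matrix.sub_mul, ← Matrix.mul_sub, Matrix.diagonal_sub, hconj]
  have hint : ∀ i, @MeasureTheory.IntegrableOn ℝ _ _ _ SeminormedAddGroup.toContinuousENorm
      (fun s : ℝ => (((s:ℂ) - lam i)⁻¹ - ((s:ℂ) - 1)⁻¹) • C i) (Set.Iio (0:ℝ)) volume :=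
    fun i => ((scalar_log_lemma (lam i) (hlam i) (habs i)).1).smul_const (C i)
  have hsumint : @MeasureTheory.IntegrableOn ℝ _ _ _ SeminormedAddGroup.toContinuousENorm
      (fun s : ℝ => ∑ i, (((s:ℂ) - lam i)⁻¹ - ((s:ℂ) - 1)⁻¹) • C i) (Set.Iio (0:ℝ)) volume :=
    MeasureTheory.integrable_finset_sum _ (fun i _ => hint i)
  constructor
  · exact hsumint.congr_fun (fun s hs => (hrep s hs).symm) measurableSet_Iio
  · rw [MeasureTheory.setIntegral_congr_fun measurableSet_Iio hrep]
    rw [MeasureTheory.integral_finset_sum _ (fun i _ => hint i)]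
    rw [hconj]
    congr 1
    funext i
    rw [integral_smul_const, (scalar_log_lemma (lam i) (hlam i) (habs i)).2]

open Set Filter Topology in
lemma smul_one_eq_diagonal' {n : ℕ} (c : ℂ) :
    c • (1 : Matrix (Fin n) (Fin n) ℂ) = Matrix.diagonal (fun _ => c) := by
  ext j k
  by_cases h : j = k
  · subst h; simp
  · simp [Matrix.diagonal_apply_ne _ h, Matrix.one_apply_ne h]

open Set Filter Topology in
lemma conj_diag_mul {n : ℕ} (P Q : Matrix (Fin n) (Fin n) ℂ) (hQP : Q * P = 1)
    (d e : Fin n → ℂ) :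
    (P * Matrix.diagonal d * Q) * (P * Matrix.diagonal e * Q) =
      P * Matrix.diagonal (fun i => d i * e i) * Q := by
  have : (P * Matrix.diagonal d * Q) * (P * Matrix.diagonal e * Q) =
      P * (Matrix.diagonal d * (Q * P) * Matrix.diagonal e) * Q := by
    simp only [Matrix.mul_assoc]
  rw [this, hQP, Matrix.mul_one, Matrix.diagonal_mul_diagonal]

-- spectral decomposition of a unitary matrix transversal to -1, via Cayley transform
open Set Filter Topology in
lemma unitary_diag {n : ℕ} (u : Matrix (Fin n) (Fin n) ℂ)
    (hu : u ∈ Matrix.unitaryGroup (Fin n) ℂ) (hdet : Matrix.det (1 + u) ≠ 0) :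
    ∃ (P Q : Matrix (Fin n) (Fin n) ℂ) (lam : Fin n → ℂ),
      P * Q = 1 ∧ Q * P = 1 ∧ u = P * Matrix.diagonal lam * Q ∧
      (∀ i, (lam i).im ≠ 0 ∨ lam i = 1) ∧ (∀ i, ‖lam i‖ = 1) := by
  classical
  have hstar' : u * star u = 1 := (Matrix.mem_unitaryGroup_iff.mp hu)
  have huinv : u⁻¹ = star u := Matrix.inv_eq_right_inv hstar'
  have hudet : u.det ≠ 0 := by
    intro h
    have := congrArg Matrix.det hstar'
    rw [Matrix.det_mul, h, zero_mul, Matrix.det_one] at this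
    exact zero_ne_one this
  have h1u : (1 + u) * (1 + u)⁻¹ = 1 := Matrix.mul_nonsing_inv _ (isUnit_iff_ne_zero.2 hdet)
  have h1u' : (1 + u)⁻¹ * (1 + u) = 1 := Matrix.nonsing_inv_mul _ (isUnit_iff_ne_zero.2 hdet)
  set V : Matrix (Fin n) (Fin n) ℂ := (1 + u)⁻¹ with hV
  set A : Matrix (Fin n) (Fin n) ℂ := Complex.I • (V + V - 1) with hA
  have hVu : V * u = 1 - V := by
    have h2 : V * (1 + u) = V * 1 + V * u := Matrix.mul_add V 1 u
    rw [h1u', Matrix.mul_one] at h2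
    rw [eq_sub_iff_add_eq, add_comm]; exact h2.symm
  have huV : u * V = 1 - V := by
    have h2 : (1 + u) * V = 1 * V + u * V := Matrix.add_mul 1 u V
    rw [h1u, Matrix.one_mul] at h2
    rw [eq_sub_iff_add_eq, add_comm]; exact h2.symm
  -- (1 + u⁻¹)⁻¹ = V * u
  have hsum : (1 : Matrix (Fin n) (Fin n) ℂ) + u⁻¹ = u⁻¹ * (1 + u) := by
    rw [Matrix.mul_add, Matrix.mul_one, Matrix.nonsing_inv_mul _ (isUnit_iff_ne_zero.2 hudet),
      add_comm]
  have hinv1 : ((1 : Matrix (Fin n) (Fin n) ℂ) + u⁻¹)⁻¹ = V * u := by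
    apply Matrix.inv_eq_right_inv
    rw [hsum]
    calc u⁻¹ * (1 + u) * (V * u) = u⁻¹ * ((1 + u) * V) * u := by simp only [Matrix.mul_assoc]
      _ = 1 := by rw [h1u, Matrix.mul_one, Matrix.nonsing_inv_mul _ (isUnit_iff_ne_zero.2 hudet)]
  have hAH : A.IsHermitian := by
    show Aᴴ = A
    rw [hA, Matrix.conjTranspose_smul, Matrix.conjTranspose_sub, Matrix.conjTranspose_add,
      Matrix.conjTranspose_one]
    have hVH : Vᴴ = V * u := by
      rw [hV, Matrix.conjTranspose_nonsing_inv, Matrix.conjTranspose_add,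
        Matrix.conjTranspose_one, show uᴴ = u⁻¹ from huinv.symm, hinv1]
    rw [hVH, hVu]
    have h3 : (1 - V) + (1 - V) - 1 = -(V + V - 1) := by abel
    rw [h3]
    rw [smul_neg]
    rw [show star Complex.I = -Complex.I by simp [Complex.star_def]]
    rw [neg_smul, neg_neg]
  set P : Matrix (Fin n) (Fin n) ℂ := (hAH.eigenvectorUnitary : Matrix (Fin n) (Fin n) ℂ)
    with hP
  set Q : Matrix (Fin n) (Fin n) ℂ := star P with hQ
  have hPQ : P * Q = 1 := Matrix.mem_unitaryGroup_iff.mp (hAH.eigenvectorUnitary).2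
  have hQP : Q * P = 1 := Matrix.mem_unitaryGroup_iff'.mp (hAH.eigenvectorUnitary).2
  set a : Fin n → ℝ := hAH.eigenvalues with ha
  have hspec : A = P * Matrix.diagonal (fun i => ((a i : ℝ) : ℂ)) * Q := by
    have := hAH.spectral_theorem
    rw [Unitary.conjStarAlgAut_apply, ← hP, ← hQ] at this
    exact this
  set lam : Fin n → ℂ := fun i => (Complex.I - (a i : ℂ)) * ((a i : ℂ) + Complex.I)⁻¹ with hlam
  have hdpne : ∀ i, ((a i : ℂ) + Complex.I) ≠ 0 := by
    intro i h
    have := congrArg Complex.im h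
    simpa using this
  have hIane : ∀ i, (Complex.I - (a i : ℂ)) ≠ 0 := by
    intro i h
    have := congrArg Complex.im h
    simpa using this
  -- key identity
  have key : u * (A + Complex.I • 1) = Complex.I • 1 - A := by
    have e1 : A + Complex.I • 1 = Complex.I • (V + V) := by
      rw [hA, ← smul_add]
      congr 1
      abel
    have e2 : Complex.I • (1 : Matrix (Fin n) (Fin n) ℂ) - A = Complex.I • ((1 - V) + (1 - V)) := by
      rw [hA, ← smul_sub]
      congr 1
      abel
    rw [e1, e2, Matrix.mul_smul, Matrix.mul_add, huV]
  -- conjugation form of A + I•1 etc.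
  have hApI : A + Complex.I • 1 = P * Matrix.diagonal (fun i => (a i : ℂ) + Complex.I) * Q := by
    rw [hspec, smul_one_eq_diagonal', show Matrix.diagonal (fun _ : Fin n => Complex.I) =
      P * Matrix.diagonal (fun _ : Fin n => Complex.I) * Q from ?_]
    · rw [← Matrix.add_mul, ← Matrix.mul_add, Matrix.diagonal_add]
    · rw [← smul_one_eq_diagonal', Matrix.mul_smul, Matrix.smul_mul, Matrix.mul_one, hPQ]
  have hImA : Complex.I • (1 : Matrix (Fin n) (Fin n) ℂ) - A =
      P * Matrix.diagonal (fun i => Complex.I - (a i : ℂ)) * Q := by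
    rw [hspec, smul_one_eq_diagonal', show Matrix.diagonal (fun _ : Fin n => Complex.I) =
      P * Matrix.diagonal (fun _ : Fin n => Complex.I) * Q from ?_]
    · rw [← Matrix.sub_mul, ← Matrix.mul_sub, Matrix.diagonal_sub]
    · rw [← smul_one_eq_diagonal', Matrix.mul_smul, Matrix.smul_mul, Matrix.mul_one, hPQ]
  have hApIinv : (A + Complex.I • 1)⁻¹ =
      P * Matrix.diagonal (fun i => ((a i : ℂ) + Complex.I)⁻¹) * Q := by
    rw [hApI]
    apply Matrix.inv_eq_right_inv
    rw [conj_diag_mul P Q hQP]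
    have : (fun i => ((a i : ℂ) + Complex.I) * ((a i : ℂ) + Complex.I)⁻¹) =
        fun _ : Fin n => (1:ℂ) := by
      funext i; exact mul_inv_cancel₀ (hdpne i)
    rw [this, Matrix.diagonal_one, Matrix.mul_one, hPQ]
  have hunit : (A + Complex.I • 1) * (A + Complex.I • 1)⁻¹ = 1 := by
    rw [hApIinv, hApI, conj_diag_mul P Q hQP]
    have : (fun i => ((a i : ℂ) + Complex.I) * ((a i : ℂ) + Complex.I)⁻¹) =
        fun _ : Fin n => (1:ℂ) := by
      funext i; exact mul_inv_cancel₀ (hdpne i)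
    rw [this, Matrix.diagonal_one, Matrix.mul_one, hPQ]
  have hu_eq : u = P * Matrix.diagonal lam * Q := by
    have h5 : u * ((A + Complex.I • 1) * (A + Complex.I • 1)⁻¹) =
        (Complex.I • 1 - A) * (A + Complex.I • 1)⁻¹ := by
      rw [← Matrix.mul_assoc, key]
    rw [hunit, Matrix.mul_one] at h5
    rw [h5, hImA, hApIinv, conj_diag_mul P Q hQP]
  refine ⟨P, Q, lam, hPQ, hQP, hu_eq, ?_, ?_⟩
  · intro i
    by_cases h : a i = 0
    · right
      simp [hlam, h, Complex.inv_I]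
    · left
      have hns : Complex.normSq ((a i : ℂ) + Complex.I) = a i ^ 2 + 1 := by
        simp [Complex.normSq_apply]
        try ring
      have him : (lam i).im = 2 * a i / (a i ^ 2 + 1) := by
        rw [hlam]
        simp only [Complex.mul_im, Complex.inv_im, Complex.inv_re, hns, Complex.add_re,
          Complex.add_im, Complex.I_re, Complex.I_im, Complex.ofReal_re, Complex.ofReal_im,
          Complex.sub_re, Complex.sub_im]
        field_simp
        ring
      rw [him]
      have hpos : (0:ℝ) < a i ^ 2 + 1 := by positivity
      exact div_ne_zero (by simpa using h) hpos.ne'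
  · intro i
    have e : ‖Complex.I - (a i : ℂ)‖ = ‖(a i : ℂ) + Complex.I‖ := by
      rw [Complex.norm_def, Complex.norm_def]
      congr 1
      simp [Complex.normSq_apply]
      try ring
    rw [hlam]
    simp only [norm_mul, norm_inv]
    rw [e]
    exact mul_inv_cancel₀ (by
      intro h
      exact hdpne i ((norm_eq_zero).1 h))

open Set Filter Topology in
/-- The Jordan-algebra logarithm of a unitary matrix `u` transversal to `−I`
(`det(I + u) ≠ 0`): the function `s ↦ (sI − u)⁻¹ − (s−1)⁻¹ I` is integrable on
`(−∞, 0)`, and its integral `L` satisfies `exp L = u`, `exp (tr L) = det u`, and the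
corresponding integral for `u⁻¹` (which is also transversal to `−I`) equals `−L`. -/
theorem unitary_logarithm (n : ℕ) (hn : 1 ≤ n)
    (u : Matrix (Fin n) (Fin n) ℂ) (hu : u ∈ Matrix.unitaryGroup (Fin n) ℂ)
    (hdet : Matrix.det (1 + u) ≠ 0)
    (f : ℝ → Matrix (Fin n) (Fin n) ℂ)
    (hf : f = fun s => (s • (1 : Matrix (Fin n) (Fin n) ℂ) - u)⁻¹ -
      (s - 1)⁻¹ • (1 : Matrix (Fin n) (Fin n) ℂ)) :
    @MeasureTheory.IntegrableOn ℝ _ _ _ SeminormedAddGroup.toContinuousENorm f (Set.Iio (0 : ℝ)) volume ∧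
    NormedSpace.exp (∫ s in Set.Iio (0 : ℝ), f s) = u ∧
    Complex.exp (∫ s in Set.Iio (0 : ℝ), f s).trace = u.det ∧
    Matrix.det (1 + u⁻¹) ≠ 0 ∧
    (∫ s in Set.Iio (0 : ℝ), ((s • (1 : Matrix (Fin n) (Fin n) ℂ) - u⁻¹)⁻¹ -
        (s - 1)⁻¹ • (1 : Matrix (Fin n) (Fin n) ℂ))) =
      - ∫ s in Set.Iio (0 : ℝ), f s := by
  classical
  obtain ⟨P, Q, lam, hPQ, hQP, hueq, hlam, habs⟩ := unitary_diag u hu hdet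
  have hlam0 : ∀ i, lam i ≠ 0 := by
    intro i h
    have := habs i
    rw [h] at this
    simp at this
  obtain ⟨hint, hval⟩ := conj_diag_integral P Q hPQ hQP lam hlam habs
  have hfeq : f = fun s : ℝ => (s • (1 : Matrix (Fin n) (Fin n) ℂ) -
      P * Matrix.diagonal lam * Q)⁻¹ - (s - 1)⁻¹ • (1 : Matrix (Fin n) (Fin n) ℂ) := by
    rw [hf, hueq]
  have hintf : @MeasureTheory.IntegrableOn ℝ _ _ _ SeminormedAddGroup.toContinuousENorm f (Set.Iio (0 : ℝ)) volume := by rw [hfeq]; exact hint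
  have hvalf : (∫ s in Set.Iio (0:ℝ), f s) =
      P * Matrix.diagonal (fun i => Complex.log (lam i)) * Q := by
    rw [hfeq]; exact hval
  have hPunit : IsUnit P := ⟨⟨P, Q, hPQ, hQP⟩, rfl⟩
  have hPinv : P⁻¹ = Q := Matrix.inv_eq_right_inv hPQ
  -- exp
  have hexp : NormedSpace.exp (∫ s in Set.Iio (0:ℝ), f s) = u := by
    rw [hvalf]
    have := Matrix.exp_conj P (Matrix.diagonal (fun i => Complex.log (lam i))) hPunit
    rw [hPinv] at this
    rw [this, Matrix.exp_diagonal]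
    have hdd : NormedSpace.exp (fun i => Complex.log (lam i)) = lam := by
      funext i
      rw [Pi.coe_exp, ← Complex.exp_eq_exp_ℂ, Complex.exp_log (hlam0 i)]
    rw [hdd, ← hueq]
  -- trace
  have hPQdet : P.det * Q.det = 1 := by rw [← Matrix.det_mul, hPQ, Matrix.det_one]
  have hdetu : u.det = ∏ i, lam i := by
    rw [hueq, Matrix.det_mul, Matrix.det_mul, Matrix.det_diagonal]
    calc P.det * (∏ i, lam i) * Q.det = (P.det * Q.det) * ∏ i, lam i := by ring
      _ = ∏ i, lam i := by rw [hPQdet, one_mul]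
  have htr : Complex.exp (∫ s in Set.Iio (0:ℝ), f s).trace = u.det := by
    rw [hvalf]
    rw [Matrix.trace_mul_cycle, hQP, Matrix.one_mul, Matrix.trace_diagonal]
    rw [Complex.exp_sum, hdetu]
    exact Finset.prod_congr rfl fun i _ => Complex.exp_log (hlam0 i)
  -- invertibility of u
  have hudet : u.det ≠ 0 := by
    rw [hdetu]
    exact Finset.prod_ne_zero_iff.2 fun i _ => hlam0 i
  have hsum : (1 : Matrix (Fin n) (Fin n) ℂ) + u⁻¹ = u⁻¹ * (1 + u) := by
    rw [Matrix.mul_add, Matrix.mul_one, Matrix.nonsing_inv_mul _ (isUnit_iff_ne_zero.2 hudet),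
      add_comm]
  have hdet2 : Matrix.det (1 + u⁻¹) ≠ 0 := by
    rw [hsum, Matrix.det_mul]
    apply mul_ne_zero
    · rw [Matrix.det_nonsing_inv]
      simpa [Ring.inverse_eq_inv'] using inv_ne_zero hudet
    · exact hdet
  -- u⁻¹ diagonalization
  have huinv_eq : u⁻¹ = P * Matrix.diagonal (fun i => (lam i)⁻¹) * Q := by
    apply Matrix.inv_eq_right_inv
    rw [hueq, conj_diag_mul P Q hQP]
    have h6 : (fun i => lam i * (lam i)⁻¹) = fun _ : Fin n => (1:ℂ) :=
      funext fun i => mul_inv_cancel₀ (hlam0 i)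
    rw [h6, Matrix.diagonal_one, Matrix.mul_one, hPQ]
  obtain ⟨hint2, hval2⟩ := conj_diag_integral P Q hPQ hQP (fun i => (lam i)⁻¹)
    (fun i => by
      rcases hlam i with h | h
      · left
        show ((lam i)⁻¹).im ≠ 0
        rw [Complex.inv_im]
        exact div_ne_zero (neg_ne_zero.2 h)
          (fun hns => hlam0 i (Complex.normSq_eq_zero.mp hns))
      · right
        show (lam i)⁻¹ = 1
        rw [h, inv_one])
    (fun i => by
      show ‖(lam i)⁻¹‖ = 1
      rw [norm_inv, habs i]; norm_num)
  refine ⟨hintf, hexp, htr, hdet2, ?_⟩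
  rw [show u⁻¹ = P * Matrix.diagonal (fun i => (lam i)⁻¹) * Q from huinv_eq, hval2, hvalf]
  have h7 : (fun i => Complex.log ((lam i)⁻¹)) = fun i => -Complex.log (lam i) := by
    funext i
    rcases hlam i with h | h
    · exact Complex.log_inv _ (fun harg => h (Complex.arg_eq_pi_iff.mp harg).2)
    · rw [h]; simp
  rw [h7]
  have h8 : Matrix.diagonal (fun i => -Complex.log (lam i)) =
      -Matrix.diagonal (fun i => Complex.log (lam i)) := by
    rw [← Matrix.diagonal_neg]
  rw [h8, Matrix.mul_neg, Matrix.neg_mul]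
end

section
/- Let n ≥ 1, J = fromBlocks I_n 0 0 (−I_n) ∈ M_{2n}(ℂ). Suppose z₁, w₁, z₂, w₂ are n×n unitary matrices with det(z₁ − w₁) ≠ 0 and det(z₂ − w₂) ≠ 0. Then there exist n×n complex matrices a, b, c, d such that the block matrix g = fromBlocks a b c d satisfies g* J g = J, the matrices c z₁ + d and c w₁ + d are invertible, and (a z₁ + b)(c z₁ + d)⁻¹ = z₂ and (a w₁ + b)(c w₁ + d)⁻¹ = w₂. -/
open Matrix

/-!
Identify `z` with its graph, the column block `[z; 1]`. For `J = diag(1, -1)` the Hermitian form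
between graphs is `(graph z)ᴴ J (graph w) = zᴴ w - 1`: it vanishes on the diagonal when `z` is
unitary and is invertible exactly when `z ⊤ w`. Hence for a transversal pair the frame
`F = [graph z | graph w * t]` with `t = (zᴴ w - 1)⁻¹` has Gram matrix `[[0, 1], [1, 0]]`, the same
for every pair. So `G = F₂ F₁⁻¹` preserves `J`, and `G F₁ = F₂` says that `G` maps the graphs of
`z₁, w₁` to those of `z₂, w₂` up to invertible right factors, which is the fractional action.
-/

namespace Matrix

variable {m R : Type*} [Fintype m] [CommRing R]

section Form

variable [StarRing R]

theorem fromCols_conjTranspose_mul_mul_fromCols {n₁ n₂ : Type*} (A : Matrix m n₁ R)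
    (B : Matrix m n₂ R) (J : Matrix m m R) :
    (fromCols A B)ᴴ * J * fromCols A B =
      fromBlocks (Aᴴ * J * A) (Aᴴ * J * B) (Bᴴ * J * A) (Bᴴ * J * B) := by
  simp [conjTranspose_fromCols_eq_fromRows_conjTranspose]

variable [DecidableEq m]

theorem conjTranspose_mul_mul_mul_inv {J M N : Matrix m m R} (hN : IsUnit N.det)
    (h : Mᴴ * J * M = Nᴴ * J * N) : (M * N⁻¹)ᴴ * J * (M * N⁻¹) = J := by
  calc (M * N⁻¹)ᴴ * J * (M * N⁻¹) = N⁻¹ᴴ * (Mᴴ * J * M) * N⁻¹ := by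
        simp only [conjTranspose_mul, Matrix.mul_assoc]
    _ = (N * N⁻¹)ᴴ * J * (N * N⁻¹) := by
        rw [h]; simp only [conjTranspose_mul, Matrix.mul_assoc]
    _ = J := by rw [mul_nonsing_inv _ hN, conjTranspose_one, Matrix.one_mul, Matrix.mul_one]

theorem isUnit_det_of_conjTranspose_mul_mul_eq {J M E : Matrix m m R} (h : Mᴴ * J * M = E)
    (hE : E * E = 1) : IsUnit M.det :=
  isUnit_det_of_left_inverse (B := E * Mᴴ * J) (by
    rw [Matrix.mul_assoc, Matrix.mul_assoc, ← Matrix.mul_assoc Mᴴ, h, hE])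

end Form

variable [DecidableEq m]

def graph (z : Matrix m m R) : Matrix (m ⊕ m) m R := fromRows z 1

theorem fractional_eq_of_mul_graph_eq {g : Matrix (m ⊕ m) (m ⊕ m) R} {z z' k : Matrix m m R}
    (h : g * graph z = graph z' * k) (hk : IsUnit k) :
    IsUnit (g.toBlocks₂₁ * z + g.toBlocks₂₂) ∧
      (g.toBlocks₁₁ * z + g.toBlocks₁₂) * (g.toBlocks₂₁ * z + g.toBlocks₂₂)⁻¹ = z' := by
  rw [← fromBlocks_toBlocks g] at h
  simp only [graph, fromBlocks_mul_fromRows, fromRows_mul, Matrix.mul_one, Matrix.one_mul] at h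
  obtain ⟨hnum, hden⟩ := fromRows_inj h
  rw [hden, hnum]
  exact ⟨hk, mul_nonsing_inv_cancel_right _ _ ((isUnit_iff_isUnit_det _).mp hk)⟩

variable (m R) in
def indefiniteForm : Matrix (m ⊕ m) (m ⊕ m) R := fromBlocks 1 0 0 (-1)

def graphFrame (z w t : Matrix m m R) : Matrix (m ⊕ m) (m ⊕ m) R :=
  fromCols (graph z) (graph w * t)

variable [StarRing R]

theorem graph_conjTranspose_mul_mul_graph (z w : Matrix m m R) :
    (graph z)ᴴ * indefiniteForm m R * graph w = zᴴ * w - 1 := by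
  simp [graph, indefiniteForm, conjTranspose_fromRows_eq_fromCols_conjTranspose,
    fromCols_mul_fromBlocks, fromCols_mul_fromRows, sub_eq_add_neg]

theorem isUnit_det_conjTranspose_mul_sub_one {z w : Matrix m m R} (hz : z ∈ unitaryGroup m R)
    (hzw : IsUnit (z - w).det) : IsUnit (zᴴ * w - 1).det := by
  have hz' : zᴴ * z = 1 := by rwa [mem_unitaryGroup_iff', star_eq_conjTranspose] at hz
  have : zᴴ * w - 1 = -(zᴴ * (z - w)) := by rw [Matrix.mul_sub, hz', neg_sub]
  rw [this, det_neg, det_mul, det_conjTranspose]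
  exact (isUnit_neg_one.pow _).mul ((UnitaryGroup.det_isUnit ⟨z, hz⟩).star.mul hzw)

theorem graphFrame_conjTranspose_mul_mul {z w t : Matrix m m R} (hz : z ∈ unitaryGroup m R)
    (hw : w ∈ unitaryGroup m R) (ht : (zᴴ * w - 1) * t = 1) :
    (graphFrame z w t)ᴴ * indefiniteForm m R * graphFrame z w t = fromBlocks 0 1 1 0 := by
  have ht' : tᴴ * (wᴴ * z - 1) = 1 := by
    simpa [conjTranspose_mul, conjTranspose_sub] using congrArg conjTranspose ht
  rw [mem_unitaryGroup_iff', star_eq_conjTranspose] at hz hw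
  have e₁₂ : (graph z)ᴴ * indefiniteForm m R * (graph w * t) = (zᴴ * w - 1) * t := by
    rw [← Matrix.mul_assoc, graph_conjTranspose_mul_mul_graph]
  have e₂₁ : tᴴ * (graph w)ᴴ * indefiniteForm m R * graph z = tᴴ * (wᴴ * z - 1) := by
    rw [Matrix.mul_assoc tᴴ, Matrix.mul_assoc tᴴ, graph_conjTranspose_mul_mul_graph]
  have e₂₂ : tᴴ * (graph w)ᴴ * indefiniteForm m R * (graph w * t) = tᴴ * (wᴴ * w - 1) * t := by
    rw [← Matrix.mul_assoc, Matrix.mul_assoc tᴴ, Matrix.mul_assoc tᴴ,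
      graph_conjTranspose_mul_mul_graph]
  rw [graphFrame, fromCols_conjTranspose_mul_mul_fromCols, conjTranspose_mul, e₁₂, e₂₁, e₂₂,
    graph_conjTranspose_mul_mul_graph, hz, hw, ht, ht', sub_self, Matrix.mul_zero,
    Matrix.zero_mul]

theorem exists_graphFrame_conjTranspose_mul_mul_eq {z w : Matrix m m R}
    (hz : z ∈ unitaryGroup m R) (hw : w ∈ unitaryGroup m R) (hzw : IsUnit (z - w).det) :
    ∃ t, IsUnit t.det ∧
      (graphFrame z w t)ᴴ * indefiniteForm m R * graphFrame z w t = fromBlocks 0 1 1 0 := by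
  have h := isUnit_det_conjTranspose_mul_sub_one hz hzw
  exact ⟨(zᴴ * w - 1)⁻¹, isUnit_nonsing_inv_det _ h,
    graphFrame_conjTranspose_mul_mul hz hw (mul_nonsing_inv _ h)⟩

end Matrix

theorem two_transitivity_on_transversal_pairs_general (n : ℕ)
    (J : Matrix (Fin n ⊕ Fin n) (Fin n ⊕ Fin n) ℂ)
    (hJ : J = Matrix.fromBlocks 1 0 0 (-1))
    (z₁ w₁ z₂ w₂ : Matrix (Fin n) (Fin n) ℂ)
    (hz₁ : z₁ ∈ Matrix.unitaryGroup (Fin n) ℂ) (hw₁ : w₁ ∈ Matrix.unitaryGroup (Fin n) ℂ)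
    (hz₂ : z₂ ∈ Matrix.unitaryGroup (Fin n) ℂ) (hw₂ : w₂ ∈ Matrix.unitaryGroup (Fin n) ℂ)
    (h₁ : Matrix.det (z₁ - w₁) ≠ 0) (h₂ : Matrix.det (z₂ - w₂) ≠ 0) :
    ∃ a b c d : Matrix (Fin n) (Fin n) ℂ,
      (Matrix.fromBlocks a b c d)ᴴ * J * Matrix.fromBlocks a b c d = J ∧
      IsUnit (c * z₁ + d) ∧ IsUnit (c * w₁ + d) ∧
      (a * z₁ + b) * (c * z₁ + d)⁻¹ = z₂ ∧
      (a * w₁ + b) * (c * w₁ + d)⁻¹ = w₂ := by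
  obtain ⟨t₁, ht₁, hF₁⟩ :=
    exists_graphFrame_conjTranspose_mul_mul_eq hz₁ hw₁ (isUnit_iff_ne_zero.mpr h₁)
  obtain ⟨t₂, ht₂, hF₂⟩ :=
    exists_graphFrame_conjTranspose_mul_mul_eq hz₂ hw₂ (isUnit_iff_ne_zero.mpr h₂)
  have hF₁_det := isUnit_det_of_conjTranspose_mul_mul_eq hF₁ (by simp [fromBlocks_multiply])
  set G := graphFrame z₂ w₂ t₂ * (graphFrame z₁ w₁ t₁)⁻¹
  have hG : G * graphFrame z₁ w₁ t₁ = graphFrame z₂ w₂ t₂ :=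
    nonsing_inv_mul_cancel_right _ _ hF₁_det
  obtain ⟨hGz, hGw⟩ := fromCols_inj (by simpa only [graphFrame, mul_fromCols] using hG)
  have hGw' : G * graph w₁ = graph w₂ * (t₂ * t₁⁻¹) := by
    rw [← Matrix.mul_assoc, ← hGw, ← Matrix.mul_assoc, mul_nonsing_inv_cancel_right _ _ ht₁]
  obtain ⟨hz_unit, hz⟩ :=
    fractional_eq_of_mul_graph_eq (k := 1) (by rw [hGz, Matrix.mul_one]) isUnit_one
  have ht : IsUnit (t₂ * t₁⁻¹) := (isUnit_iff_isUnit_det _).mpr <| by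
    rw [det_mul]; exact ht₂.mul (isUnit_nonsing_inv_det _ ht₁)
  obtain ⟨hw_unit, hw⟩ := fractional_eq_of_mul_graph_eq hGw' ht
  refine ⟨G.toBlocks₁₁, G.toBlocks₁₂, G.toBlocks₂₁, G.toBlocks₂₂, ?_, hz_unit, hw_unit, hz, hw⟩
  rw [fromBlocks_toBlocks, hJ]
  exact conjTranspose_mul_mul_mul_inv hF₁_det (hF₂.trans hF₁.symm)

/-- 2-transitivity of the conformal group on transversal pairs of the Shilov boundary
`U(n)`: given unitary `z₁, w₁` and `z₂, w₂` with `det(z₁ − w₁) ≠ 0` and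
`det(z₂ − w₂) ≠ 0`, there is a block matrix `g = [[a,b],[c,d]]` with `g* J g = J`
(`J = diag(I_n, −I_n)`) whose fractional action sends `z₁ ↦ z₂` and `w₁ ↦ w₂`. -/
theorem two_transitivity_on_transversal_pairs (n : ℕ) (hn : 1 ≤ n)
    (J : Matrix (Fin n ⊕ Fin n) (Fin n ⊕ Fin n) ℂ)
    (hJ : J = Matrix.fromBlocks 1 0 0 (-1))
    (z₁ w₁ z₂ w₂ : Matrix (Fin n) (Fin n) ℂ)
    (hz₁ : z₁ ∈ Matrix.unitaryGroup (Fin n) ℂ) (hw₁ : w₁ ∈ Matrix.unitaryGroup (Fin n) ℂ)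
    (hz₂ : z₂ ∈ Matrix.unitaryGroup (Fin n) ℂ) (hw₂ : w₂ ∈ Matrix.unitaryGroup (Fin n) ℂ)
    (h₁ : Matrix.det (z₁ - w₁) ≠ 0) (h₂ : Matrix.det (z₂ - w₂) ≠ 0) :
    ∃ a b c d : Matrix (Fin n) (Fin n) ℂ,
      (Matrix.fromBlocks a b c d)ᴴ * J * Matrix.fromBlocks a b c d = J ∧
      IsUnit (c * z₁ + d) ∧ IsUnit (c * w₁ + d) ∧
      (a * z₁ + b) * (c * z₁ + d)⁻¹ = z₂ ∧
      (a * w₁ + b) * (c * w₁ + d)⁻¹ = w₂ :=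
  two_transitivity_on_transversal_pairs_general n J hJ z₁ w₁ z₂ w₂ hz₁ hw₁ hz₂ hw₂ h₁ h₂
end
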